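/- arXiv:2502.16026 — 9 statements merged into one kernel-verified Lean document; each statement's English description precedes it below -/
import Mathlib

section
/- Let R be a commutative Noetherian ring with unity, H a finitely generated abelian group of positive rank, M a finitely generated RH-module, and χ : H → ℝ a nonzero group homomorphism. Then M is NOT finitely generated as an RH_χ-module if and only if Ann(M) ∩ 𝒮_χ = ∅, where Ann(M) denotes the annihilator ideal of M in RH. -/
open AddMonoidAlgebra

set_option synthInstance.maxHeartbeats 1000000
set_option maxHeartbeats 1000000

/-- The subring `RH_χ` of the group algebra `R[H]` consisting of elements supported on
the submonoid `H_χ = {h : χ h ≥ 0}`. -/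
def coneSubring (R : Type*) [CommRing R] {H : Type*} [AddCommGroup H] (χ : H →+ ℝ) :
    Subring (AddMonoidAlgebra R H) where
  carrier := {f | ∀ h ∈ f.coeff.support, 0 ≤ χ h}
  zero_mem' := by simp
  one_mem' := by
    classical
    intro h hh
    have h0 : h = 0 := by
      have : h ∈ ({0} : Finset H) :=
        Finsupp.support_single_subset (by simpa [AddMonoidAlgebra.one_def] using hh)
      simpa using this
    simp [h0]
  add_mem' := by
    classical
    intro a b ha hb h hh
    rcases Finset.mem_union.mp (Finsupp.support_add hh) with h' | h'
    · exact ha h h'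
    · exact hb h h'
  mul_mem' := by
    classical
    intro a b ha hb h hh
    have h2 := AddMonoidAlgebra.support_coeff_mul_subset a b hh
    rcases Finset.mem_add.mp h2 with ⟨x, hx, y, hy, rfl⟩
    have := add_nonneg (ha x hx) (hb y hy)
    simpa using this
  neg_mem' := by
    intro a ha h hh
    exact ha h (by rwa [AddMonoidAlgebra.coeff_neg, Finsupp.support_neg] at hh)

/-- The multiplicative set `𝒮_χ` of elements `1 + g` where `g` is supported on
`{h : χ h > 0}`. -/
def sChi (R : Type*) [CommRing R] {H : Type*} [AddCommGroup H] (χ : H →+ ℝ) :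
    Set (AddMonoidAlgebra R H) :=
  {f | ∃ g : AddMonoidAlgebra R H, (∀ h ∈ g.coeff.support, 0 < χ h) ∧ f = 1 + g}

section Aux

variable {R : Type*} [CommRing R] {H : Type*} [AddCommGroup H] (χ : H →+ ℝ)
variable {M : Type*} [AddCommGroup M] [Module (AddMonoidAlgebra R H) M]

lemma single_mem_cone {h : H} (hh : 0 ≤ χ h) (r : R) :
    AddMonoidAlgebra.single h r ∈ coneSubring R χ := by
  intro u hu
  have : u ∈ ({h} : Finset H) := Finsupp.support_single_subset hu
  simp only [Finset.mem_singleton] at this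
  subst this
  exact hh

/-- Direction 1: if `Ann(M)` contains an element of `𝒮_χ`, then `M` is finitely generated
over the cone subring. -/
lemma finite_over_cone_of_ann
    [Module.Finite (AddMonoidAlgebra R H) M]
    {g : AddMonoidAlgebra R H} (hg : ∀ h ∈ g.coeff.support, 0 < χ h)
    (hann : (1 + g) ∈ Module.annihilator (AddMonoidAlgebra R H) M) :
    Module.Finite (coneSubring R χ) M := by
  classical
  obtain ⟨s, hs⟩ := (Module.Finite.fg_top : (⊤ : Submodule (AddMonoidAlgebra R H) M).FG)
  set S := coneSubring R χ with hS
  set N : Submodule S M := Submodule.span S (s : Set M) with hN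
  -- closure of N under `single h 1 •` for nonnegative h
  have base : ∀ (h : H), 0 ≤ χ h → ∀ m ∈ N, AddMonoidAlgebra.single h (1 : R) • m ∈ N := by
    intro h hh m hm
    have : AddMonoidAlgebra.single h (1 : R) • m
        = (⟨AddMonoidAlgebra.single h (1 : R), single_mem_cone χ hh 1⟩ : S) • m := rfl
    rw [this]
    exact N.smul_mem _ hm
  have key : ∀ (h : H) (m : M), m ∈ N → AddMonoidAlgebra.single h (1 : R) • m ∈ N := by
    by_cases hg0 : g = 0
    · -- then 1 annihilates M, so M = 0
      intro h m _
      have h1 : (1 : AddMonoidAlgebra R H) • m = 0 := by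
        have := Module.mem_annihilator.mp hann m
        simpa [hg0] using this
      have : m = 0 := by simpa using h1
      rw [this, smul_zero]
      exact N.zero_mem
    · have hne : g.coeff.support.Nonempty := by
        rwa [Finsupp.support_nonempty_iff, Ne, AddMonoidAlgebra.coeff_eq_zero]
      set ε : ℝ := g.coeff.support.inf' hne (fun u => χ u) with hε
      have hεpos : 0 < ε := by
        rw [hε, Finset.lt_inf'_iff]
        intro u hu; exact hg u hu
      have hεle : ∀ u ∈ g.coeff.support, ε ≤ χ u := fun u hu => Finset.inf'_le _ hu
      have claim : ∀ n : ℕ, ∀ h : H, -(n * ε) ≤ χ h →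
          ∀ m ∈ N, AddMonoidAlgebra.single h (1 : R) • m ∈ N := by
        intro n
        induction n with
        | zero =>
          intro h hh m hm
          exact base h (by simpa using hh) m hm
        | succ n ih =>
          intro h hh m hm
          by_cases hpos : 0 ≤ χ h
          · exact base h hpos m hm
          · push_neg at hpos
            have hm0 : m = -(g • m) := by
              have := Module.mem_annihilator.mp hann m
              rw [add_smul, one_smul] at this
              linear_combination (norm := abel) this
            have expand : AddMonoidAlgebra.single h (1 : R) * g
                = ∑ u ∈ g.coeff.support, AddMonoidAlgebra.single (h + u) (g.coeff u) := by
              conv_lhs => rw [← AddMonoidAlgebra.sum_coeff_single g]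
              rw [Finsupp.sum, Finset.mul_sum]
              refine Finset.sum_congr rfl fun u _ => ?_
              rw [AddMonoidAlgebra.single_mul_single, one_mul]
            have : AddMonoidAlgebra.single h (1 : R) • m
                = -∑ u ∈ g.coeff.support, AddMonoidAlgebra.single (h + u) (g.coeff u) • m := by
              conv_lhs => rw [hm0]
              rw [smul_neg, smul_smul, expand, Finset.sum_smul]
            rw [this]
            refine N.neg_mem (N.sum_mem fun u hu => ?_)
            have hterm : AddMonoidAlgebra.single (h + u) (g.coeff u)
                = AddMonoidAlgebra.single 0 (g.coeff u) * AddMonoidAlgebra.single (h + u) (1 : R) := by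
              rw [AddMonoidAlgebra.single_mul_single, zero_add, mul_one]
            rw [hterm, mul_smul]
            have hmem : AddMonoidAlgebra.single (0 : H) (g.coeff u) ∈ S :=
              single_mem_cone χ (by simp) _
            have hin : AddMonoidAlgebra.single (h + u) (1 : R) • m ∈ N := by
              refine ih (h + u) ?_ m hm
              have h1 : ε ≤ χ u := hεle u hu
              have h2 : -((n + 1 : ℕ) * ε) ≤ χ h := hh
              rw [map_add]
              push_cast at h2 ⊢
              nlinarith
            have : AddMonoidAlgebra.single (0 : H) (g.coeff u)
                • (AddMonoidAlgebra.single (h + u) (1 : R) • m)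
                = (⟨_, hmem⟩ : S) • (AddMonoidAlgebra.single (h + u) (1 : R) • m) := rfl
            rw [this]
            exact N.smul_mem _ hin
      intro h m hm
      obtain ⟨n, hn⟩ := exists_nat_ge ((-χ h) / ε)
      have : -(n * ε) ≤ χ h := by
        rw [div_le_iff₀ hεpos] at hn
        linarith
      exact claim n h this m hm
  -- now closure under all of RH
  have allA : ∀ (a : AddMonoidAlgebra R H) (m : M), m ∈ N → a • m ∈ N := by
    intro a
    induction a using AddMonoidAlgebra.induction with
    | zero => intro m _; simp
    | single_add h r f _ _ ih =>
      intro m hm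
      rw [add_smul]
      refine N.add_mem ?_ (ih m hm)
      show AddMonoidAlgebra.single h r • m ∈ N
      have : AddMonoidAlgebra.single h r
          = AddMonoidAlgebra.single 0 r * AddMonoidAlgebra.single h (1 : R) := by
        rw [AddMonoidAlgebra.single_mul_single, zero_add, mul_one]
      rw [this, mul_smul]
      have hmem : AddMonoidAlgebra.single (0 : H) r ∈ S := single_mem_cone χ (by simp) _
      have : AddMonoidAlgebra.single (0 : H) r • (AddMonoidAlgebra.single h (1 : R) • m)
          = (⟨_, hmem⟩ : S) • (AddMonoidAlgebra.single h (1 : R) • m) := rfl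
      rw [this]
      exact N.smul_mem _ (key h m hm)
  have Ntop : N = ⊤ := by
    rw [eq_top_iff]
    intro m _
    have hmem : m ∈ Submodule.span (AddMonoidAlgebra R H) (s : Set M) := by
      rw [hs]; trivial
    refine Submodule.span_induction (fun x hx => Submodule.subset_span hx) (N.zero_mem)
      (fun x y _ _ hx hy => N.add_mem hx hy) (fun a x _ hx => allA a x hx) hmem
  exact ⟨⟨s, by rw [← hN]; exact Ntop⟩⟩

/-- Direction 2: if `M` is finitely generated over the cone subring, then `Ann(M)` meets `𝒮_χ`. -/
lemma exists_ann_inter_of_finite_over_cone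
    (hχ : χ ≠ 0) [Module.Finite (coneSubring R χ) M] :
    ∃ f, f ∈ Module.annihilator (AddMonoidAlgebra R H) M ∧ f ∈ sChi R χ := by
  classical
  rcases subsingleton_or_nontrivial R with hR | hR
  · -- trivial ring: everything annihilates
    refine ⟨1, Module.mem_annihilator.mpr fun m => ?_, ⟨0, by simp, by simp⟩⟩
    have : (1 : AddMonoidAlgebra R H) = 0 := Subsingleton.elim _ _
    rw [this, zero_smul]
  -- get t with χ t > 0
  obtain ⟨h0, hh0⟩ : ∃ h, χ h ≠ 0 := by
    by_contra hc
    push_neg at hc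
    exact hχ (by ext h; simpa using hc h)
  obtain ⟨t, ht⟩ : ∃ t : H, 0 < χ t := by
    rcases lt_or_gt_of_ne hh0 with h | h
    · exact ⟨-h0, by simpa using h⟩
    · exact ⟨h0, h⟩
  set S := coneSubring R χ with hS
  set A := AddMonoidAlgebra R H with hA
  set x : A := AddMonoidAlgebra.single (-t) (1 : R) with hx
  set ρ : A →ₐ[S] Module.End S M := Algebra.lsmul (↥S) (↥S) M (A := A) with hρ
  obtain ⟨p, pmonic, hp⟩ :=
    (Module.End.isIntegral (R := S) (M := M)).isIntegral (ρ x)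
  set q : A := Polynomial.aeval x p with hq
  have hqann : q ∈ Module.annihilator A M := by
    refine Module.mem_annihilator.mpr fun m => ?_
    have h1 : ρ q = 0 := by
      rw [hq, ← Polynomial.aeval_algHom_apply]
      exact hp
    have : q • m = (ρ q) m := rfl
    rw [this, h1]
    rfl
  set k := p.natDegree with hk
  by_cases hk0 : k = 0
  · have hp1 : p = 1 := (Polynomial.Monic.natDegree_eq_zero pmonic).mp hk0
    refine ⟨q, hqann, ⟨0, by simp, by simp [hq, hp1]⟩⟩
  · have hklt : 0 < k := Nat.pos_of_ne_zero hk0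
    set f : A := AddMonoidAlgebra.single (k • t) (1 : R) * q with hf
    have hfann : f ∈ Module.annihilator A M := Ideal.mul_mem_left _ _ hqann
    refine ⟨f, hfann, ⟨f - 1, ?_, by ring⟩⟩
    -- support claim
    set pr : Polynomial S := p - Polynomial.X ^ k with hpr
    have hsplit : f - 1 = AddMonoidAlgebra.single (k • t) (1 : R) * Polynomial.aeval x pr := by
      have h1 : q = x ^ k + Polynomial.aeval x pr := by
        rw [hq, hpr, map_sub, Polynomial.aeval_X_pow]
        ring
      have h2 : AddMonoidAlgebra.single (k • t) (1 : R) * x ^ k = 1 := by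
        rw [hx, AddMonoidAlgebra.single_pow, AddMonoidAlgebra.single_mul_single,
          one_mul, one_pow, smul_neg, add_neg_cancel]
        rfl
      rw [hf, h1, mul_add, h2]
      ring
    -- degree bound: natDegree pr < k  (or pr = 0)
    have hsupp : ∀ u ∈ (Polynomial.aeval x pr : A).coeff.support, -((k : ℝ) - 1) * χ t ≤ χ u := by
      by_cases hpr0 : pr = 0
      · simp [hpr0]
      have hdlt : pr.natDegree < k := by
        refine Polynomial.natDegree_lt_natDegree hpr0 ?_
        rw [hpr]
        have hpne : p ≠ 0 := pmonic.ne_zero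
        refine Polynomial.degree_sub_lt ?_ hpne ?_
        · rw [Polynomial.degree_X_pow, Polynomial.degree_eq_natDegree hpne, hk]
        · rw [Polynomial.monic_X_pow k |>.leadingCoeff, pmonic.leadingCoeff]
      intro u hu
      rw [Polynomial.aeval_eq_sum_range (p := pr) x, AddMonoidAlgebra.coeff_sum] at hu
      have := Finsupp.support_finset_sum hu
      rw [Finset.mem_biUnion] at this
      obtain ⟨i, hi, hui⟩ := this
      rw [Finset.mem_range, Nat.lt_succ_iff] at hi
      -- pr.coeff i • x ^ i = ↑(pr.coeff i) * x ^ i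
      have hsm : (pr.coeff i • x ^ i : A) = ((pr.coeff i : A) * x ^ i) :=
        Subring.smul_def _ _
      rw [hsm] at hui
      have h2 := AddMonoidAlgebra.support_coeff_mul_subset _ _ hui
      rcases Finset.mem_add.mp h2 with ⟨v, hv, w, hw, rfl⟩
      have hv0 : 0 ≤ χ v := (pr.coeff i).2 v hv
      have hw0 : χ w = -(i * χ t) := by
        rw [hx, AddMonoidAlgebra.single_pow, one_pow] at hw
        have : w ∈ ({i • (-t)} : Finset H) := Finsupp.support_single_subset hw
        simp only [Finset.mem_singleton] at this
        subst this
        rw [smul_neg, map_neg, map_nsmul, nsmul_eq_mul]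
      rw [map_add, hw0]
      have hik : (i : ℝ) ≤ (k : ℝ) - 1 := by
        have : (i : ℝ) ≤ ((pr.natDegree : ℝ)) := by exact_mod_cast hi
        have h3 : ((pr.natDegree : ℝ)) ≤ (k : ℝ) - 1 := by
          have h4 : pr.natDegree + 1 ≤ k := hdlt
          have h5 : ((pr.natDegree + 1 : ℕ) : ℝ) ≤ (k : ℝ) := Nat.cast_le.mpr h4
          push_cast at h5
          linarith
        linarith
      nlinarith
    intro u hu
    rw [hsplit] at hu
    have h2 := AddMonoidAlgebra.support_coeff_mul_subset _ _ hu
    rcases Finset.mem_add.mp h2 with ⟨v, hv, w, hw, rfl⟩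
    have hv0 : v = k • t := by
      have : v ∈ ({k • t} : Finset H) := Finsupp.support_single_subset hv
      simpa using this
    subst hv0
    have hw0 := hsupp w hw
    rw [map_add, map_nsmul, nsmul_eq_mul]
    have hk1 : (1 : ℝ) ≤ (k : ℝ) := by exact_mod_cast hklt
    nlinarith

end Aux

/-- Bieri–Strebel. Let `R` be a commutative Noetherian ring, `H` a finitely
generated abelian group of positive rank (i.e. infinite), `M` a finitely generated `RH`-module
and `χ : H → ℝ` a nonzero character. Then `M` is *not* finitely generated over `RH_χ` iff
`Ann(M) ∩ 𝒮_χ = ∅`. -/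
theorem not_finite_over_cone_iff_annihilator_inter_sChi_empty
    (R : Type*) [CommRing R] [IsNoetherianRing R]
    (H : Type*) [AddCommGroup H] [AddGroup.FG H] [Infinite H]
    (M : Type*) [AddCommGroup M] [Module (AddMonoidAlgebra R H) M]
    [Module.Finite (AddMonoidAlgebra R H) M]
    (χ : H →+ ℝ) (hχ : χ ≠ 0) :
    ¬ Module.Finite (coneSubring R χ) M ↔
      (Module.annihilator (AddMonoidAlgebra R H) M : Set (AddMonoidAlgebra R H)) ∩ sChi R χ
        = ∅ := by
  constructor
  · intro hnf
    by_contra hne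
    obtain ⟨f, hfann, hfs⟩ := Set.nonempty_iff_ne_empty.mpr hne
    obtain ⟨g, hgsupp, rfl⟩ := hfs
    exact hnf (finite_over_cone_of_ann χ hgsupp hfann)
  · intro hempty hfin
    obtain ⟨f, hfann, hfs⟩ := exists_ann_inter_of_finite_over_cone (R := R) χ hχ (M := M)
    exact Set.eq_empty_iff_forall_notMem.mp hempty f ⟨hfann, hfs⟩
end

section
/- Let R be a commutative Noetherian ring with unity, H a finitely generated abelian group of positive rank, M a finitely generated RH-module, and χ : H → ℝ a nonzero group homomorphism. Then the following are equivalent: (a) M is not finitely generated as an RH_χ-module; (b) RH/Ann(M) is not finitely generated as an RH_χ-module; (c) there exists a minimal prime ideal 𝔭 of RH over Ann(M) such that RH/𝔭 is not finitely generated as an RH_χ-module. In particular, whether M is finitely generated over RH_χ depends only on the radical √(Ann(M)). -/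
set_option maxHeartbeats 1000000
set_option synthInstance.maxHeartbeats 1000000

open AddMonoidAlgebra

namespace BieriStrebelAux

variable {R : Type*} [CommRing R] {H : Type*} [AddCommGroup H] {χ : H →+ ℝ}

lemma smul_comm_cone {P : Type*} [AddCommGroup P] [Module (AddMonoidAlgebra R H) P]
    (c : AddMonoidAlgebra R H) (a : coneSubring R χ) (p : P) :
    c • (a • p) = a • (c • p) := by
  show c • ((a : AddMonoidAlgebra R H) • p) = (a : AddMonoidAlgebra R H) • (c • p)
  rw [smul_smul, smul_smul, mul_comm]

/-- Span bootstrapping lemma. -/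
lemma span_helper {P : Type*} [AddCommGroup P] [Module (AddMonoidAlgebra R H) P]
    (X Y : Set P)
    (hY : ∀ y ∈ Y, y ∈ Submodule.span (coneSubring R χ) X)
    (hX : ∀ (c : AddMonoidAlgebra R H), ∀ x ∈ X, c • x ∈ Submodule.span (coneSubring R χ) X) :
    ∀ p ∈ Submodule.span (AddMonoidAlgebra R H) Y,
      p ∈ Submodule.span (coneSubring R χ) X := by
  have hclosed : ∀ (c : AddMonoidAlgebra R H) (x : P),
      x ∈ Submodule.span (coneSubring R χ) X →
      c • x ∈ Submodule.span (coneSubring R χ) X := by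
    intro c x hx
    induction hx using Submodule.span_induction with
    | mem x hx => exact hX c x hx
    | zero => rw [smul_zero]; exact Submodule.zero_mem _
    | add x y _ _ ihx ihy => rw [smul_add]; exact Submodule.add_mem _ ihx ihy
    | smul a x _ ih => rw [smul_comm_cone]; exact Submodule.smul_mem _ _ ih
  intro p hp
  induction hp using Submodule.span_induction with
  | mem y hy => exact hY y hy
  | zero => exact Submodule.zero_mem _
  | add x y _ _ ihx ihy => exact Submodule.add_mem _ ihx ihy
  | smul c x _ ih => exact hclosed c x ih

/-- Any element of `R[H]` may be written as `u ^ k * a` with `a` in the cone,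
where `u = single (-t) 1` and `χ t > 0`. -/
lemma shift (t : H) (ht : 0 < χ t) (c : AddMonoidAlgebra R H) :
    ∃ (k : ℕ) (a : AddMonoidAlgebra R H), a ∈ coneSubring R χ ∧
      c = (AddMonoidAlgebra.single (-t) (1 : R)) ^ k * a := by
  classical
  obtain ⟨k, hk⟩ : ∃ k : ℕ, ∀ h ∈ c.coeff.support, 0 ≤ χ h + k * χ t := by
    rcases c.coeff.support.eq_empty_or_nonempty with he | hne
    · exact ⟨0, fun h hh => by simp [he] at hh⟩
    · obtain ⟨k, hk⟩ := exists_nat_ge (c.coeff.support.sup' hne fun h => -χ h / χ t)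
      refine ⟨k, fun h hh => ?_⟩
      have h1 : -χ h / χ t ≤ (k : ℝ) := le_trans (Finset.le_sup' (fun h => -χ h / χ t) hh) hk
      have h2 := (div_le_iff₀ ht).mp h1
      linarith
  refine ⟨k, AddMonoidAlgebra.single (k • t) 1 * c, ?_, ?_⟩
  · intro h hh
    have h2 := AddMonoidAlgebra.support_coeff_mul_subset (AddMonoidAlgebra.single (k • t) (1 : R)) c hh
    rcases Finset.mem_add.mp h2 with ⟨x, hx, y, hy, rfl⟩
    have hx0 : x = k • t := by
      have : x ∈ ({k • t} : Finset H) := Finsupp.support_single_subset (by simpa using hx)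
      simpa using this
    subst hx0
    have hχ : χ (k • t + y) = k * χ t + χ y := by
      rw [map_add, map_nsmul, nsmul_eq_mul]
    rw [hχ]
    have := hk y hy
    linarith
  · rw [AddMonoidAlgebra.single_pow, ← mul_assoc, AddMonoidAlgebra.single_mul_single]
    rw [smul_neg, neg_add_cancel, one_pow, mul_one, ← AddMonoidAlgebra.one_def, one_mul]

lemma finite_of_restrict_fg {P : Type*} [AddCommGroup P] [Module (AddMonoidAlgebra R H) P]
    (N : Submodule (AddMonoidAlgebra R H) P)
    (h : (N.restrictScalars (coneSubring R χ)).FG) :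
    Module.Finite (coneSubring R χ) ↥N := by
  have : Module.Finite (coneSubring R χ) ↥(N.restrictScalars (coneSubring R χ)) :=
    Module.Finite.iff_fg.mpr h
  exact this

/-- **Key lemma** (Cayley–Hamilton argument): if `P` is finitely generated over the cone
subring, then every finitely generated `R[H]`-submodule of `P` is finitely generated
over the cone subring. -/
lemma key_submodule (t : H) (ht : 0 < χ t)
    {P : Type*} [AddCommGroup P] [Module (AddMonoidAlgebra R H) P]
    [hP : Module.Finite (coneSubring R χ) P]
    (N : Submodule (AddMonoidAlgebra R H) P) (hN : N.FG) :
    Module.Finite (coneSubring R χ) ↥N := by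
  classical
  set A := coneSubring R χ with hA
  set u : AddMonoidAlgebra R H := AddMonoidAlgebra.single (-t) 1 with hu
  set φ : Module.End A P := (LinearMap.lsmul (AddMonoidAlgebra R H) P u).restrictScalars A with hφ
  obtain ⟨f, hf, hf0⟩ := Algebra.IsIntegral.isIntegral (R := A) φ
  set n := f.natDegree with hn
  have hφpow : ∀ (k : ℕ) (q : P), (φ ^ k) q = u ^ k • q := by
    intro k
    induction k with
    | zero => intro q; simp
    | succ k ih =>
      intro q
      rw [pow_succ, Module.End.mul_apply, ih]
      show u ^ k • (u • q) = u ^ (k + 1) • q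
      rw [smul_smul, ← pow_succ]
  have hrel : ∀ q : P, u ^ n • q = -∑ i ∈ Finset.range n, f.coeff i • (u ^ i • q) := by
    intro q
    have h0 : (Polynomial.aeval φ) f = 0 := hf0
    rw [Polynomial.aeval_eq_sum_range] at h0
    have h1 := congrArg (fun g : Module.End A P => g q) h0
    simp only [LinearMap.zero_apply] at h1
    rw [Finset.sum_range_succ] at h1
    have h2 : (∑ i ∈ Finset.range n, f.coeff i • φ ^ i) q
        + (f.coeff n • φ ^ n) q = 0 := by
      rw [hn]; simpa using h1
    have h3 : (f.coeff n • φ ^ n) q = u ^ n • q := by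
      rw [LinearMap.smul_apply, hφpow, hf.coeff_natDegree]
      simp
    have h4 : (∑ i ∈ Finset.range n, f.coeff i • φ ^ i) q
        = ∑ i ∈ Finset.range n, f.coeff i • (u ^ i • q) := by
      rw [LinearMap.sum_apply]
      refine Finset.sum_congr rfl fun i _ => ?_
      rw [LinearMap.smul_apply, hφpow]
    rw [h4, h3] at h2
    exact eq_neg_of_add_eq_zero_left (by rwa [add_comm] at h2)
  have claimC : ∀ (k : ℕ) (q : P), u ^ k • q ∈
      Submodule.span A ((fun i => u ^ i • q) '' Set.Iio n) := by
    intro k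
    induction k using Nat.strong_induction_on with
    | _ k ih =>
      intro q
      by_cases hk : k < n
      · exact Submodule.subset_span ⟨k, hk, rfl⟩
      · push_neg at hk
        have hdecomp : u ^ k • q = u ^ (k - n) • (u ^ n • q) := by
          rw [smul_smul, ← pow_add]
          congr 2
          omega
        rw [hdecomp, hrel q, smul_neg, Finset.smul_sum]
        refine Submodule.neg_mem _ (Submodule.sum_mem _ fun i hi => ?_)
        have hi' : i < n := Finset.mem_range.mp hi
        have heq : u ^ (k - n) • (f.coeff i • (u ^ i • q))
            = f.coeff i • (u ^ (k - n + i) • q) := by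
          rw [smul_comm_cone, smul_smul, ← pow_add]
        rw [heq]
        exact Submodule.smul_mem _ _ (ih (k - n + i) (by omega) q)
  obtain ⟨Yf, hYf⟩ := hN
  set X : Set P := (fun pr : ℕ × P => u ^ pr.1 • pr.2) '' (Set.Iio n ×ˢ (↑Yf : Set P)) with hX
  have hXfin : X.Finite := ((Set.finite_Iio n).prod Yf.finite_toSet).image _
  have hsub : ∀ y ∈ (↑Yf : Set P),
      Submodule.span A ((fun i => u ^ i • y) '' Set.Iio n) ≤ Submodule.span A X := by
    intro y hy
    apply Submodule.span_mono
    rintro _ ⟨i, hi, rfl⟩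
    exact ⟨(i, y), ⟨hi, hy⟩, rfl⟩
  have hY : ∀ y ∈ (↑Yf : Set P), y ∈ Submodule.span A X := by
    intro y hy
    have h0 := claimC 0 y
    rw [pow_zero, one_smul] at h0
    exact hsub y hy h0
  have hXc : ∀ (c : AddMonoidAlgebra R H), ∀ x ∈ X, c • x ∈ Submodule.span A X := by
    rintro c _ ⟨⟨i, y⟩, ⟨hi, hy⟩, rfl⟩
    obtain ⟨k, a, ha, hca⟩ := shift t ht (c * u ^ i)
    rw [← hu] at hca
    have heq : c • (u ^ i • y) = (⟨a, ha⟩ : A) • (u ^ k • y) := by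
      show c • (u ^ i • y) = a • (u ^ k • y)
      rw [smul_smul, smul_smul, hca, mul_comm]
    rw [heq]
    exact Submodule.smul_mem _ _ (hsub y hy (claimC k y))
  have hNX : ∀ p ∈ N, p ∈ Submodule.span A X := by
    intro p hp
    rw [← hYf] at hp
    exact span_helper X (↑Yf) hY hXc p hp
  apply finite_of_restrict_fg
  apply Submodule.fg_def.mpr
  refine ⟨X, hXfin, le_antisymm ?_ ?_⟩
  · rw [Submodule.span_le]
    rintro _ ⟨⟨i, y⟩, ⟨hi, hy⟩, rfl⟩
    show u ^ i • y ∈ N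
    exact Submodule.smul_mem N _ (hYf ▸ Submodule.subset_span hy)
  · intro p hp
    exact hNX p hp

/-- If `P` is a finitely generated `R[H]`-module annihilated by an ideal `I` such that
`R[H]/I` is finitely generated over the cone, then `P` is finitely generated over
the cone. -/
lemma finite_of_quot_finite {P : Type*} [AddCommGroup P] [Module (AddMonoidAlgebra R H) P]
    [hP : Module.Finite (AddMonoidAlgebra R H) P]
    (I : Ideal (AddMonoidAlgebra R H)) (hIP : ∀ c ∈ I, ∀ p : P, c • p = 0)
    (hq : Module.Finite (coneSubring R χ) (AddMonoidAlgebra R H ⧸ I)) :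
    Module.Finite (coneSubring R χ) P := by
  classical
  set A := coneSubring R χ with hA
  obtain ⟨s, hs⟩ := hq.fg_top
  choose lift hlift using fun x : AddMonoidAlgebra R H ⧸ I =>
    Submodule.Quotient.mk_surjective I x
  obtain ⟨T, hT⟩ := hP.fg_top
  have key : ∀ (c : AddMonoidAlgebra R H) (p : P),
      c • p ∈ Submodule.span A ((fun g : AddMonoidAlgebra R H => g • p) '' (lift '' ↑s)) := by
    intro c p
    have hker : I ≤ LinearMap.ker (LinearMap.toSpanSingleton (AddMonoidAlgebra R H) P p) := by
      intro d hd
      simpa [LinearMap.mem_ker] using hIP d hd p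
    set θ : (AddMonoidAlgebra R H ⧸ I) →ₗ[AddMonoidAlgebra R H] P :=
      Submodule.liftQ I _ hker with hθdef
    have hθ : ∀ x : AddMonoidAlgebra R H, θ (Submodule.Quotient.mk x) = x • p :=
      fun x => rfl
    have h2 : (Submodule.Quotient.mk c : AddMonoidAlgebra R H ⧸ I) ∈
        Submodule.span A ↑s := by rw [hs]; trivial
    have h3 := Submodule.apply_mem_span_image_of_mem_span (θ.restrictScalars A) h2
    have h5 : (⇑(θ.restrictScalars A)) '' ↑s ⊆
        (fun g : AddMonoidAlgebra R H => g • p) '' (lift '' ↑s) := by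
      rintro _ ⟨x, hx, rfl⟩
      refine ⟨lift x, ⟨x, hx, rfl⟩, ?_⟩
      show lift x • p = θ x
      conv_rhs => rw [← hlift x]
      exact (hθ (lift x)).symm
    have h6 := Submodule.span_mono h5 h3
    have h7 : (θ.restrictScalars A) (Submodule.Quotient.mk c) = c • p := hθ c
    rwa [h7] at h6
  set G : Set (AddMonoidAlgebra R H) := lift '' ↑s with hG
  have hGfin : G.Finite := s.finite_toSet.image _
  set X : Set P := Set.image2 (fun g m => g • m) G (↑T : Set P) with hXdef
  have hXfin : X.Finite := Set.Finite.image2 _ hGfin T.finite_toSet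
  have hY : ∀ m ∈ (↑T : Set P), m ∈ Submodule.span A X := by
    intro m hm
    have h0 := key 1 m
    rw [one_smul] at h0
    refine Submodule.span_mono ?_ h0
    rintro _ ⟨g, hg, rfl⟩
    exact Set.mem_image2_of_mem hg hm
  have hXc : ∀ (c : AddMonoidAlgebra R H), ∀ x ∈ X, c • x ∈ Submodule.span A X := by
    rintro c _ ⟨g, hg, m, hm, rfl⟩
    rw [smul_smul]
    refine Submodule.span_mono ?_ (key (c * g) m)
    rintro _ ⟨g', hg', rfl⟩
    exact Set.mem_image2_of_mem hg' hm
  refine ⟨Submodule.fg_def.mpr ⟨X, hXfin, ?_⟩⟩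
  rw [eq_top_iff]
  intro p _
  have hp : p ∈ Submodule.span (AddMonoidAlgebra R H) (↑T : Set P) := by rw [hT]; trivial
  exact span_helper X (↑T) hY hXc p hp

/-- Extensions of modules finitely generated over the cone are finitely generated over
the cone. -/
lemma finite_of_sub_quot {P : Type*} [AddCommGroup P] [Module (AddMonoidAlgebra R H) P]
    (N : Submodule (AddMonoidAlgebra R H) P)
    (h1 : Module.Finite (coneSubring R χ) ↥N)
    (h2 : Module.Finite (coneSubring R χ) (P ⧸ N)) :
    Module.Finite (coneSubring R χ) P := by
  set A := coneSubring R χ with hA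
  have hNr : (N.restrictScalars A).FG := by
    have h1' : Module.Finite A ↥(N.restrictScalars A) := h1
    exact Module.Finite.iff_fg.mp h1'
  haveI := h2
  have h2' : Module.Finite A (P ⧸ N.restrictScalars A) :=
    Module.Finite.equiv (Submodule.Quotient.restrictScalarsEquiv A N).symm
  refine ⟨?_⟩
  have hmap : ((⊤ : Submodule A P).map (N.restrictScalars A).mkQ).FG := by
    rw [Submodule.map_top, Submodule.range_mkQ]
    exact h2'.fg_top
  have hker : ((⊤ : Submodule A P) ⊓ LinearMap.ker (N.restrictScalars A).mkQ).FG := by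
    rw [top_inf_eq, Submodule.ker_mkQ]
    exact hNr
  exact Submodule.fg_of_fg_map_of_fg_inf_ker (N.restrictScalars A).mkQ hmap hker

lemma list_prod_le_of_mem {S : Type*} [CommSemiring S] :
    ∀ {l : List (Ideal S)} {p : Ideal S}, p ∈ l → l.prod ≤ p := by
  intro l
  induction l with
  | nil => intro p hp; simp at hp
  | cons q l ih =>
    intro p hp
    rcases List.mem_cons.mp hp with rfl | hp
    · rw [List.prod_cons]; exact Ideal.mul_le_left
    · rw [List.prod_cons]; exact le_trans Ideal.mul_le_right (ih hp)

lemma ideal_pow_le_pow {S : Type*} [CommSemiring S] {I J : Ideal S} (h : I ≤ J) (k : ℕ) :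
    I ^ k ≤ J ^ k := by
  induction k with
  | zero => simp
  | succ k ih => rw [pow_succ, pow_succ]; exact Ideal.mul_mono ih h

/-- If `P` is a finitely generated `R[H]`-module annihilated by a product of ideals,
each of whose quotients is finitely generated over the cone, then `P` is finitely
generated over the cone. -/
lemma finite_of_list_prod_ann [IsNoetherianRing (AddMonoidAlgebra R H)]
    (l : List (Ideal (AddMonoidAlgebra R H))) :
    (∀ q ∈ l, Module.Finite (coneSubring R χ) (AddMonoidAlgebra R H ⧸ q)) →
    ∀ (P : Type*) [AddCommGroup P] [Module (AddMonoidAlgebra R H) P]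
      [Module.Finite (AddMonoidAlgebra R H) P],
      (∀ c ∈ l.prod, ∀ p : P, c • p = 0) →
      Module.Finite (coneSubring R χ) P := by
  induction l with
  | nil =>
    intro _ P _ _ _ hann
    have hzero : ∀ p : P, p = 0 := by
      intro p
      have h1 : (1 : AddMonoidAlgebra R H) ∈ (List.prod ([] : List (Ideal (AddMonoidAlgebra R H)))) := by
        rw [List.prod_nil, Ideal.one_eq_top]
        exact Submodule.mem_top
      have h2 := hann 1 h1 p
      rwa [one_smul] at h2
    haveI : Subsingleton P := subsingleton_of_forall_eq 0 fun p => hzero p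
    exact Module.Finite.of_finite
  | cons q l ih =>
    intro hl P _ _ _ hann
    haveI : IsNoetherian (AddMonoidAlgebra R H) P := inferInstance
    set N : Submodule (AddMonoidAlgebra R H) P := l.prod • ⊤ with hNdef
    have hkill : ∀ c ∈ q, ∀ x ∈ N, c • x = 0 := by
      intro c hc x hx
      refine Submodule.smul_induction_on hx ?_ ?_
      · intro r hr m _
        rw [smul_smul]
        exact hann (c * r) (by rw [List.prod_cons]; exact Ideal.mul_mem_mul hc hr) m
      · intro x y hx' hy'
        rw [smul_add, hx', hy', add_zero]
    haveI hNfin : Module.Finite (AddMonoidAlgebra R H) ↥N :=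
      Module.Finite.iff_fg.mpr (IsNoetherian.noetherian N)
    have hN1 : Module.Finite (coneSubring R χ) ↥N := by
      apply finite_of_quot_finite q ?_ (hl q List.mem_cons_self)
      intro c hc p
      apply Subtype.ext
      show c • (p : P) = 0
      exact hkill c hc p p.2
    haveI hPN : Module.Finite (AddMonoidAlgebra R H) (P ⧸ N) :=
      Module.Finite.of_surjective N.mkQ
        (fun y => (Submodule.Quotient.mk_surjective N y).imp fun a ha => ha)
    have hN2 : Module.Finite (coneSubring R χ) (P ⧸ N) := by
      apply ih (fun q' hq' => hl q' (List.mem_cons_of_mem _ hq')) (P ⧸ N)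
      intro c hc pb
      obtain ⟨p, rfl⟩ := Submodule.Quotient.mk_surjective N pb
      rw [← Submodule.Quotient.mk_smul, Submodule.Quotient.mk_eq_zero]
      exact Submodule.smul_mem_smul hc Submodule.mem_top
    exact finite_of_sub_quot N hN1 hN2

end BieriStrebelAux

/-- Bieri–Strebel. For `R` commutative Noetherian, `H` a finitely generated
abelian group of positive rank, `M` a finitely generated `RH`-module and `χ : H → ℝ` a nonzero
character, the following are equivalent: `M` is not finitely generated over `RH_χ`;
`RH/Ann(M)` is not finitely generated over `RH_χ`; some quotient `RH/𝔭` by a minimal prime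
`𝔭` over `Ann(M)` is not finitely generated over `RH_χ`.  In particular the property depends
only on `√Ann(M)`. -/
theorem not_finite_over_cone_iff_quotient_annihilator_iff_minimalPrime
    (R : Type*) [CommRing R] [IsNoetherianRing R]
    (H : Type*) [AddCommGroup H] [AddGroup.FG H] [Infinite H]
    (M : Type*) [AddCommGroup M] [Module (AddMonoidAlgebra R H) M]
    [Module.Finite (AddMonoidAlgebra R H) M]
    (χ : H →+ ℝ) (hχ : χ ≠ 0) :
    (¬ Module.Finite (coneSubring R χ) M ↔
        ¬ Module.Finite (coneSubring R χ)
          (AddMonoidAlgebra R H ⧸ Module.annihilator (AddMonoidAlgebra R H) M)) ∧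
    (¬ Module.Finite (coneSubring R χ) M ↔
        ∃ 𝔭 ∈ (Module.annihilator (AddMonoidAlgebra R H) M).minimalPrimes,
          ¬ Module.Finite (coneSubring R χ) (AddMonoidAlgebra R H ⧸ 𝔭)) := by
  classical
  haveI : AddMonoid.FG H := AddGroup.fg_iff_addMonoid_fg.mp ‹_›
  haveI hNoeth : IsNoetherianRing (AddMonoidAlgebra R H) :=
    Algebra.FiniteType.isNoetherianRing R _
  obtain ⟨t, ht⟩ : ∃ t : H, 0 < χ t := by
    obtain ⟨h, hh⟩ := DFunLike.ne_iff.mp hχ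
    rcases lt_or_gt_of_ne hh with h1 | h1
    · exact ⟨-h, by rw [map_neg]; exact neg_pos.mpr h1⟩
    · exact ⟨h, h1⟩
  set A := coneSubring R χ with hAdef
  set I := Module.annihilator (AddMonoidAlgebra R H) M with hIdef
  -- (a) → (b)
  have hab : Module.Finite A M → Module.Finite A (AddMonoidAlgebra R H ⧸ I) := by
    intro hM
    obtain ⟨T, hT⟩ := ‹Module.Finite (AddMonoidAlgebra R H) M›.fg_top
    set ψ : AddMonoidAlgebra R H →ₗ[AddMonoidAlgebra R H] (↥T → M) :=
      LinearMap.pi (fun i => LinearMap.toSpanSingleton (AddMonoidAlgebra R H) M i.1) with hψ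
    have hker : LinearMap.ker ψ = I := by
      ext c
      rw [LinearMap.mem_ker, hIdef, Module.mem_annihilator]
      constructor
      · intro hc m
        have hm : m ∈ Submodule.span (AddMonoidAlgebra R H) (↑T : Set M) := by
          rw [hT]; trivial
        induction hm using Submodule.span_induction with
        | mem x hx =>
          have h0 : ψ c ⟨x, hx⟩ = 0 := by rw [hc]; rfl
          simpa [hψ, LinearMap.pi_apply, LinearMap.toSpanSingleton_apply] using h0
        | zero => simp
        | add x y _ _ ihx ihy => rw [smul_add, ihx, ihy, add_zero]
        | smul d x _ ihx => rw [smul_smul, mul_comm, ← smul_smul, ihx, smul_zero]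
      · intro hc
        ext i
        simp [hψ, LinearMap.pi_apply, LinearMap.toSpanSingleton_apply, hc]
    haveI := hM
    haveI hpi : Module.Finite A (↥T → M) := Module.Finite.pi
    have hrange : Module.Finite A ↥(LinearMap.range ψ) :=
      BieriStrebelAux.key_submodule t ht _ (IsNoetherian.noetherian _)
    haveI := hrange
    have e : (AddMonoidAlgebra R H ⧸ I) ≃ₗ[AddMonoidAlgebra R H] ↥(LinearMap.range ψ) :=
      (Submodule.quotEquivOfEq I (LinearMap.ker ψ) hker.symm).trans
        (LinearMap.quotKerEquivRange ψ)
    exact Module.Finite.equiv (e.restrictScalars A).symm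
  -- (b) → (a)
  have hba : Module.Finite A (AddMonoidAlgebra R H ⧸ I) → Module.Finite A M := by
    intro h
    exact BieriStrebelAux.finite_of_quot_finite I (fun c hc p => Module.mem_annihilator.mp hc p) h
  -- quotients by larger ideals
  have hquot : ∀ (J J' : Ideal (AddMonoidAlgebra R H)), J ≤ J' →
      Module.Finite A (AddMonoidAlgebra R H ⧸ J) →
      Module.Finite A (AddMonoidAlgebra R H ⧸ J') := by
    intro J J' hle hJ
    haveI := hJ
    set f : (AddMonoidAlgebra R H ⧸ J) →ₗ[AddMonoidAlgebra R H] (AddMonoidAlgebra R H ⧸ J') :=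
      Submodule.mapQ J J' LinearMap.id (by simpa using hle) with hf
    have hsurj : Function.Surjective f := by
      intro x
      obtain ⟨y, rfl⟩ := Submodule.Quotient.mk_surjective J' x
      exact ⟨Submodule.Quotient.mk y, by rw [hf, Submodule.mapQ_apply]; rfl⟩
    exact Module.Finite.of_surjective (f.restrictScalars A) hsurj
  -- all minimal prime quotients finite → (b)
  have hmin : (∀ 𝔭 ∈ I.minimalPrimes, Module.Finite A (AddMonoidAlgebra R H ⧸ 𝔭)) →
      Module.Finite A (AddMonoidAlgebra R H ⧸ I) := by
    intro hall
    obtain ⟨k, hk⟩ := Ideal.exists_radical_pow_le_of_fg I (IsNoetherian.noetherian _)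
    have hfin : I.minimalPrimes.Finite := by
      rw [Ideal.minimalPrimes_eq_comap]
      exact (minimalPrimes.finite_of_isNoetherianRing _).image _
    set l : List (Ideal (AddMonoidAlgebra R H)) := hfin.toFinset.toList with hl
    have hlmem : ∀ q ∈ l, q ∈ I.minimalPrimes := fun q hq =>
      hfin.mem_toFinset.mp (Finset.mem_toList.mp hq)
    have hprod : l.prod ≤ I.radical := by
      rw [← Ideal.sInf_minimalPrimes]
      apply le_sInf
      intro p hp
      exact BieriStrebelAux.list_prod_le_of_mem (Finset.mem_toList.mpr (hfin.mem_toFinset.mpr hp))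
    set L : List (Ideal (AddMonoidAlgebra R H)) := (List.replicate k l).flatten with hL
    have hLmem : ∀ q ∈ L, q ∈ I.minimalPrimes := by
      intro q hq
      obtain ⟨l', hl', hq'⟩ := List.mem_flatten.mp hq
      rw [List.eq_of_mem_replicate hl'] at hq'
      exact hlmem q hq'
    have hLprod : L.prod ≤ I := by
      have h1 : L.prod = l.prod ^ k := by
        rw [hL, List.prod_flatten, List.map_replicate, List.prod_replicate]
      rw [h1]
      exact le_trans (BieriStrebelAux.ideal_pow_le_pow hprod k) hk
    haveI : Module.Finite (AddMonoidAlgebra R H) (AddMonoidAlgebra R H ⧸ I) :=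
      Module.Finite.of_surjective I.mkQ
        (fun y => (Submodule.Quotient.mk_surjective I y).imp fun a ha => ha)
    apply BieriStrebelAux.finite_of_list_prod_ann L (fun q hq => hall q (hLmem q hq))
      (AddMonoidAlgebra R H ⧸ I)
    intro c hc pb
    obtain ⟨p, rfl⟩ := Submodule.Quotient.mk_surjective I pb
    rw [← Submodule.Quotient.mk_smul, Submodule.Quotient.mk_eq_zero]
    rw [smul_eq_mul]
    exact I.mul_mem_right p (hLprod hc)
  constructor
  · exact not_congr ⟨hab, hba⟩
  · constructor
    · intro hna
      by_contra hc
      push_neg at hc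
      exact hna (hba (hmin hc))
    · rintro ⟨𝔭, h𝔭, hnp⟩ hfinM
      exact hnp (hquot I 𝔭 h𝔭.1.2 (hab hfinM))
end

section
/- Every ring valuation v : ℤ → ℝ ∪ {∞} is non-negative (v(n) ≥ 0 for all n ∈ ℤ) and has exactly one of the following three forms: (i) the trivial valuation, with v(n) = 0 for all n ≠ 0; (ii) the mod p valuation for some prime p, with v(n) = ∞ if p divides n and v(n) = 0 otherwise; (iii) a positive multiple of the p-adic valuation for some prime p, i.e., there exist a prime p and a real number c > 0 such that v(0) = ∞ and v(n) = c·ν_p(n) for all n ≠ 0, where ν_p(n) is the exponent of p in the prime factorization of n. -/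
/-- A ring valuation `v : A → ℝ ∪ {∞}`: it satisfies `v(ab) = v(a) + v(b)`,
`v(a+b) ≥ min (v a) (v b)`, `v 0 = ∞` and `v 1 = 0`. -/
structure IsRingValuation {A : Type*} [CommRing A] (v : A → WithTop ℝ) : Prop where
  map_mul : ∀ a b : A, v (a * b) = v a + v b
  min_le_map_add : ∀ a b : A, min (v a) (v b) ≤ v (a + b)
  map_zero : v 0 = ⊤
  map_one : v 1 = 0

section Aux

variable {v : ℤ → WithTop ℝ} (hv : IsRingValuation v)

lemma RV.neg_one (hv : IsRingValuation v) : v (-1) = 0 := by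
  have h := hv.map_mul (-1) (-1)
  norm_num [hv.map_one] at h
  cases hx : v (-1) with
  | top => rw [hx] at h; simp at h
  | coe x =>
      rw [hx, ← WithTop.coe_add] at h
      have : x + x = 0 := by exact_mod_cast h.symm
      have : x = 0 := by linarith
      exact_mod_cast this

lemma RV.neg (hv : IsRingValuation v) (n : ℤ) : v (-n) = v n := by
  have h := hv.map_mul (-1) n
  rw [neg_one_mul, RV.neg_one hv, zero_add] at h
  exact h

lemma RV.nonneg (hv : IsRingValuation v) : ∀ n : ℤ, 0 ≤ v n := by
  have hnat : ∀ n : ℕ, 0 ≤ v n := by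
    intro n
    induction n with
    | zero => simp [hv.map_zero]
    | succ n ih =>
        have h := hv.min_le_map_add n 1
        rw [hv.map_one] at h
        push_cast
        exact le_trans (le_min ih le_rfl) h
  intro n
  rcases Int.natAbs_eq n with h | h
  · rw [h]; exact hnat _
  · rw [h, RV.neg hv]; exact hnat _

lemma RV.nonneg' (hv : IsRingValuation v) (n : ℤ) : 0 ≤ v n := RV.nonneg hv n

/-- if `v p > 0` for a prime `p` and `p ∤ m` then `v m = 0`. -/
lemma RV.coprime_zero (hv : IsRingValuation v) {p : ℕ} (hp : p.Prime) (hvp : 0 < v p)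
    {m : ℤ} (hm : ¬ (p : ℤ) ∣ m) : v m = 0 := by
  by_contra hne
  have hvm : 0 < v m := lt_of_le_of_ne (RV.nonneg hv m) (Ne.symm hne)
  have hcop : IsCoprime (p : ℤ) m := by
    rw [Int.isCoprime_iff_gcd_eq_one]
    rw [Int.gcd]
    exact Nat.Coprime.gcd_eq_one ((Nat.Prime.coprime_iff_not_dvd hp).mpr (fun hd => hm (Int.natCast_dvd.mpr hd)))
  obtain ⟨a, b, hab⟩ := hcop
  have h1 : (0 : WithTop ℝ) < v (a * p + b * m) := by
    refine lt_of_lt_of_le ?_ (hv.min_le_map_add (a * p) (b * m))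
    rw [lt_min_iff]
    constructor
    · rw [hv.map_mul]
      calc (0:WithTop ℝ) < v p := hvp
        _ ≤ v a + v p := le_add_of_nonneg_left (RV.nonneg hv a)
    · rw [hv.map_mul]
      calc (0:WithTop ℝ) < v m := hvm
        _ ≤ v b + v m := le_add_of_nonneg_left (RV.nonneg hv b)
  rw [hab, hv.map_one] at h1
  exact lt_irrefl _ h1

end Aux

/-- Every ring valuation `v : ℤ → ℝ ∪ {∞}` is non-negative, and it has
(exactly) one of three forms: the trivial valuation; the mod `p` valuation for a prime `p`;
or a positive multiple of the `p`-adic valuation for a prime `p`.  (The three alternatives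
below are mutually exclusive, since they prescribe different values at the relevant prime.) -/
theorem ringValuation_int_nonneg_and_trichotomy
    (v : ℤ → WithTop ℝ) (hv : IsRingValuation v) :
    (∀ n : ℤ, 0 ≤ v n) ∧
    ((∀ n : ℤ, n ≠ 0 → v n = 0) ∨
      (∃ p : ℕ, p.Prime ∧ ∀ n : ℤ, v n = if (p : ℤ) ∣ n then ⊤ else 0) ∨
      (∃ (p : ℕ) (c : ℝ), p.Prime ∧ 0 < c ∧ v 0 = ⊤ ∧
        ∀ n : ℤ, n ≠ 0 → v n = ((c * (padicValInt p n : ℝ) : ℝ) : WithTop ℝ))) := by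
  refine ⟨RV.nonneg hv, ?_⟩
  by_cases htriv : ∀ n : ℤ, n ≠ 0 → v n = 0
  · exact Or.inl htriv
  right
  push_neg at htriv
  obtain ⟨m, hm0, hvm⟩ := htriv
  -- there is a natural number ≥ 2 with positive valuation
  have hex : ∃ n : ℕ, 2 ≤ n ∧ 0 < v n := by
    refine ⟨m.natAbs, ?_, ?_⟩
    · rcases Nat.lt_or_ge m.natAbs 2 with h | h
      · interval_cases h' : m.natAbs
        · exact absurd (Int.natAbs_eq_zero.mp h') hm0
        · have : m = 1 ∨ m = -1 := Int.natAbs_eq_iff.mp (by simpa using h')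
          rcases this with rfl | rfl
          · exact absurd hv.map_one hvm
          · exact absurd (RV.neg_one hv) hvm
      · exact h
    · have : v (m.natAbs : ℤ) = v m := by
        rcases Int.natAbs_eq m with h | h
        · conv_rhs => rw [h]
        · conv_rhs => rw [h, RV.neg hv]
      rw [this]
      exact lt_of_le_of_ne (RV.nonneg hv m) (Ne.symm hvm)
  classical
  set p := Nat.find hex with hp_def
  obtain ⟨hp2, hvp⟩ := Nat.find_spec hex
  -- minimality
  have hmin : ∀ q : ℕ, 1 ≤ q → q < p → v q = 0 := by
    intro q h1 hq
    rcases Nat.lt_or_ge q 2 with h | h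
    · interval_cases q
      exact hv.map_one
    · have := Nat.find_min hex hq
      push_neg at this
      have := this h
      exact le_antisymm this (RV.nonneg hv q)
  -- p is prime
  have hp : p.Prime := by
    rw [Nat.prime_def_lt]
    refine ⟨hp2, fun q hq hdvd => ?_⟩
    by_contra hq1
    have hq0 : q ≠ 0 := by rintro rfl; simp at hdvd; omega
    have hq2 : 2 ≤ q := by omega
    obtain ⟨r, hr⟩ := hdvd
    have hr1 : 1 ≤ r := by
      rcases Nat.eq_zero_or_pos r with rfl | h
      · omega
      · exact h
    have hrp : r < p := by
      nlinarith [hr, hq2]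
    have : v p = v q + v r := by
      rw [hr]; push_cast; exact hv.map_mul q r
    rw [hmin q (by omega) hq, hmin r hr1 hrp, add_zero] at this
    rw [this] at hvp
    exact lt_irrefl _ hvp
  haveI : Fact p.Prime := ⟨hp⟩
  have hcz := fun {m : ℤ} (hm : ¬ (p:ℤ) ∣ m) => RV.coprime_zero hv hp hvp hm
  cases hvpval : v p with
  | top =>
      -- mod p valuation
      left
      refine ⟨p, hp, fun n => ?_⟩
      split_ifs with hdvd
      · obtain ⟨t, ht⟩ := hdvd
        rw [ht, hv.map_mul, hvpval, top_add]
      · exact hcz hdvd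
  | coe c =>
      -- multiple of p-adic valuation
      right
      have hc : 0 < c := by
        rw [hvpval] at hvp
        exact_mod_cast hvp
      refine ⟨p, c, hp, hc, hv.map_zero, fun n hn => ?_⟩
      set k := padicValInt p n with hk
      obtain ⟨t, ht⟩ := padicValInt_dvd (p := p) n
      have hpt : ¬ (p : ℤ) ∣ t := by
        intro ⟨s, hs⟩
        have : ((p:ℤ)) ^ (k + 1) ∣ n := ⟨s, by rw [ht, hs]; ring⟩
        rw [padicValInt_dvd_iff] at this
        rcases this with h | h
        · exact hn h
        · omega
      have hpow : ∀ j : ℕ, v ((p:ℤ) ^ j) = ((j * c : ℝ) : WithTop ℝ) := by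
        intro j
        induction j with
        | zero => simp [hv.map_one]
        | succ j ih =>
            rw [pow_succ, hv.map_mul, ih, hvpval, ← WithTop.coe_add]
            congr 1
            push_cast
            ring
      rw [ht, hv.map_mul, hpow, hcz hpt, add_zero]
      norm_num [mul_comm]
      rfl
end

section
/- Let R be a commutative ring with unity, H a finitely generated abelian group, I an ideal of the group algebra RH, and χ : H → ℝ a group homomorphism. Then 𝒮_χ ∩ I ≠ ∅ if and only if the initial ideal in_χ(I) is all of RH. -/
open AddMonoidAlgebra

/-- The initial form `in_χ(f)`: the sum of the terms of `f` on which `χ` attains its minimum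
over the support of `f` (for `f = 0` this is `0`). -/
noncomputable def initialForm {R H : Type*} [CommRing R] [AddCommGroup H] (χ : H →+ ℝ)
    (f : AddMonoidAlgebra R H) : AddMonoidAlgebra R H :=
  haveI : DecidablePred (fun h => ∀ h' ∈ f.coeff.support, χ h ≤ χ h') := Classical.decPred _
  AddMonoidAlgebra.ofCoeff (Finsupp.filter (fun h => ∀ h' ∈ f.coeff.support, χ h ≤ χ h') f.coeff)

/-- The initial ideal `in_χ(I)`, generated by the initial forms of the nonzero elements
of `I`. -/
noncomputable def initialIdeal {R H : Type*} [CommRing R] [AddCommGroup H] (χ : H →+ ℝ)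
    (I : Ideal (AddMonoidAlgebra R H)) : Ideal (AddMonoidAlgebra R H) :=
  Ideal.span {g | ∃ f ∈ I, f ≠ 0 ∧ g = initialForm χ f}

lemma AMA.add_apply {R H : Type*} [CommRing R] [AddCommGroup H]
    (f g : AddMonoidAlgebra R H) (h : H) : (f + g).coeff h = f.coeff h + g.coeff h :=
  Finsupp.add_apply f.coeff g.coeff h

lemma AMA.one_apply {R H : Type*} [CommRing R] [AddCommGroup H] (h : H) [Decidable (h = 0)] :
    (1 : AddMonoidAlgebra R H).coeff h = if h = 0 then 1 else 0 := by
  classical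
  rw [AddMonoidAlgebra.one_def, coeff_single, Finsupp.single_apply]
  simp [eq_comm]

lemma initialForm_apply {R H : Type*} [CommRing R] [AddCommGroup H] (χ : H →+ ℝ)
    (f : AddMonoidAlgebra R H) (h : H) :
    (initialForm χ f).coeff h = if ∀ h' ∈ f.coeff.support, χ h ≤ χ h' then f.coeff h else 0 := by
  classical
  rw [initialForm, coeff_ofCoeff, Finsupp.filter_apply]
  split_ifs <;> rfl

/-- Key structural lemma: for `f ≠ 0` there is a degree `d` such that the initial form is
supported in `{χ = d}` and the rest of `f` is supported in `{χ > d}`. -/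
lemma initialForm_degree {R H : Type*} [CommRing R] [AddCommGroup H] (χ : H →+ ℝ)
    (f : AddMonoidAlgebra R H) (hf : f ≠ 0) :
    ∃ d : ℝ, (∀ h ∈ (initialForm χ f).coeff.support, χ h = d) ∧
      (∀ h ∈ (f - initialForm χ f).coeff.support, d < χ h) := by
  classical
  have hne : (f.coeff.support.image χ).Nonempty := by
    simp [Finset.image_nonempty, Finsupp.support_nonempty_iff, hf]
  set d := (f.coeff.support.image χ).min' hne with hd
  obtain ⟨h₀, hh₀, hχh₀⟩ := Finset.mem_image.mp ((f.coeff.support.image χ).min'_mem hne)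
  have hmin : ∀ h ∈ f.coeff.support, d ≤ χ h := fun h hh =>
    Finset.min'_le _ _ (Finset.mem_image_of_mem χ hh)
  refine ⟨d, ?_, ?_⟩
  · intro h hh
    have h1 : h ∈ f.coeff.support ∧ ∀ h' ∈ f.coeff.support, χ h ≤ χ h' := by
      have := hh
      rw [initialForm] at this
      simpa [Finsupp.support_filter, Finset.mem_filter] using this
    exact le_antisymm (le_of_le_of_eq (h1.2 h₀ hh₀) hχh₀) (hmin h h1.1)
  · intro h hh
    have h1 : f.coeff h - (initialForm χ f).coeff h ≠ 0 := by
      rw [Finsupp.mem_support_iff, coeff_sub, Finsupp.sub_apply] at hh; exact hh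
    rw [initialForm_apply] at h1
    by_cases hp : ∀ h' ∈ f.coeff.support, χ h ≤ χ h'
    · rw [if_pos hp] at h1
      exact absurd (sub_self (f.coeff h)) h1
    · push_neg at hp
      obtain ⟨h', hh', hlt⟩ := hp
      exact lt_of_le_of_lt (hmin h' hh') hlt

lemma initialForm_one_add {R H : Type*} [CommRing R] [AddCommGroup H] [Nontrivial R]
    (χ : H →+ ℝ) (g : AddMonoidAlgebra R H) (hg : ∀ h ∈ g.coeff.support, 0 < χ h) :
    initialForm χ (1 + g) = 1 := by
  classical
  have hg0 : g.coeff 0 = 0 := by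
    by_contra h
    exact lt_irrefl (0:ℝ) (by simpa using hg 0 (Finsupp.mem_support_iff.mpr h))
  have hval0 : (1 + g : AddMonoidAlgebra R H).coeff 0 = 1 := by
    simp [AMA.add_apply, AMA.one_apply, hg0]
  have h0mem : (0 : H) ∈ (1 + g : AddMonoidAlgebra R H).coeff.support := by
    rw [Finsupp.mem_support_iff, hval0]; exact one_ne_zero
  have hsupp : ∀ h ∈ (1 + g : AddMonoidAlgebra R H).coeff.support, 0 ≤ χ h := by
    intro h hh
    have : (1 + g : AddMonoidAlgebra R H).coeff h ≠ 0 := Finsupp.mem_support_iff.mp hh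
    by_cases h0 : h = 0
    · simp [h0]
    · have : g.coeff h ≠ 0 := by
        intro hgz
        apply this
        simp [AMA.add_apply, AMA.one_apply, h0, hgz]
      exact le_of_lt (hg h (Finsupp.mem_support_iff.mpr this))
  ext h
  rw [initialForm_apply]
  by_cases h0 : h = 0
  · subst h0
    rw [if_pos (fun h' hh' => by simpa using hsupp h' hh')]
    simpa [AMA.one_apply] using hval0
  · have h1h : (1 : AddMonoidAlgebra R H).coeff h = 0 := by
      simp [AddMonoidAlgebra.one_def, coeff_single, Finsupp.single_apply, Ne.symm h0]
    rw [h1h]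
    by_cases hmem : h ∈ (1 + g : AddMonoidAlgebra R H).coeff.support
    · have hgh : g.coeff h ≠ 0 := by
        intro hgz
        apply Finsupp.mem_support_iff.mp hmem
        simp [AMA.add_apply, AMA.one_apply, h0, hgz]
      have hpos : 0 < χ h := hg h (Finsupp.mem_support_iff.mpr hgh)
      rw [if_neg]
      push_neg
      exact ⟨0, h0mem, by simpa using hpos⟩
    · split
      · exact Finsupp.notMem_support_iff.mp hmem
      · rfl

/-- For a commutative ring `R`, a finitely generated abelian group `H`, an
ideal `I ⊆ RH` and a character `χ : H → ℝ`, one has `𝒮_χ ∩ I ≠ ∅` iff the initial ideal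
`in_χ(I)` is all of `RH`. -/
theorem sChi_inter_nonempty_iff_initialIdeal_eq_top
    (R : Type*) [CommRing R]
    (H : Type*) [AddCommGroup H] [AddGroup.FG H]
    (I : Ideal (AddMonoidAlgebra R H)) (χ : H →+ ℝ) :
    (sChi R χ ∩ (I : Set (AddMonoidAlgebra R H))).Nonempty ↔ initialIdeal χ I = ⊤ := by
  classical
  rcases subsingleton_or_nontrivial R with hR | hR
  · haveI : Subsingleton (AddMonoidAlgebra R H) := ⟨fun a b => AddMonoidAlgebra.ext (Finsupp.ext fun h => Subsingleton.elim _ _)⟩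
    constructor
    · intro _
      ext x
      simp only [Submodule.mem_top, iff_true]
      exact (Subsingleton.elim x 0) ▸ (initialIdeal χ I).zero_mem
    · intro _
      exact ⟨1, ⟨0, by simp, by simp⟩, (Subsingleton.elim (1 : AddMonoidAlgebra R H) 0) ▸ I.zero_mem⟩
  constructor
  · rintro ⟨x, ⟨g, hg, rfl⟩, hxI⟩
    rw [Ideal.eq_top_iff_one, initialIdeal]
    apply Ideal.subset_span
    refine ⟨1 + g, hxI, ?_, (initialForm_one_add χ g hg).symm⟩
    intro h0
    have : (1 + g : AddMonoidAlgebra R H).coeff 0 = 1 := by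
      have hg0 : g.coeff 0 = 0 := by
        by_contra h
        exact lt_irrefl (0:ℝ) (by simpa using hg 0 (Finsupp.mem_support_iff.mpr h))
      simp [AMA.add_apply, AMA.one_apply, hg0]
    rw [h0] at this
    exact one_ne_zero this.symm
  · intro htop
    have h1 : (1 : AddMonoidAlgebra R H) ∈ initialIdeal χ I := by rw [htop]; trivial
    rw [initialIdeal] at h1
    rw [show (Ideal.span {g | ∃ f ∈ I, f ≠ 0 ∧ g = initialForm χ f} :
        Ideal (AddMonoidAlgebra R H)) = Submodule.span _ _ from rfl, Submodule.mem_span_set] at h1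
    obtain ⟨c, hcsupp, hsum⟩ := h1
    have key : ∀ s ∈ c.support, ∃ (fs : AddMonoidAlgebra R H) (ds : ℝ),
        fs ∈ I ∧ s = initialForm χ fs ∧
        (∀ h ∈ (initialForm χ fs).coeff.support, χ h = ds) ∧
        (∀ h ∈ (fs - initialForm χ fs).coeff.support, ds < χ h) := by
      intro s hs
      obtain ⟨fs, hfsI, hfs0, hfseq⟩ := hcsupp hs
      obtain ⟨ds, hd1, hd2⟩ := initialForm_degree χ fs hfs0
      exact ⟨fs, ds, hfsI, hfseq, hd1, hd2⟩
    choose! f d hfI hfin hd1 hd2 using key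
    set c₁ : AddMonoidAlgebra R H → AddMonoidAlgebra R H :=
      fun s => ofCoeff (Finsupp.filter (fun h => χ h = -(d s)) (c s).coeff) with hc₁
    set c₂ : AddMonoidAlgebra R H → AddMonoidAlgebra R H :=
      fun s => ofCoeff (Finsupp.filter (fun h => ¬ χ h = -(d s)) (c s).coeff) with hc₂
    have hsplit : ∀ s, c s = c₁ s + c₂ s := by
      intro s
      ext h
      by_cases hh : χ h = -(d s) <;>
        simp [hc₁, hc₂, AMA.add_apply, Finsupp.filter_apply, hh]
    have hsuppc₁ : ∀ s, ∀ h ∈ (c₁ s).coeff.support, χ h = -(d s) := by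
      intro s h hh
      rw [hc₁] at hh
      rw [coeff_ofCoeff, Finsupp.support_filter, Finset.mem_filter] at hh
      exact hh.2
    have hsuppc₂ : ∀ s, ∀ h ∈ (c₂ s).coeff.support, ¬ χ h = -(d s) := by
      intro s h hh
      rw [hc₂] at hh
      rw [coeff_ofCoeff, Finsupp.support_filter, Finset.mem_filter] at hh
      exact hh.2
    have hmul : ∀ (a b : AddMonoidAlgebra R H), ∀ h ∈ (a * b).coeff.support,
        ∃ x ∈ a.coeff.support, ∃ y ∈ b.coeff.support, x + y = h := by
      intro a b h hh
      have := AddMonoidAlgebra.support_coeff_mul_subset a b hh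
      rwa [Finset.mem_add] at this
    set A := ∑ s ∈ c.support, c₁ s * initialForm χ (f s) with hA
    set B := ∑ s ∈ c.support, c₂ s * initialForm χ (f s) with hB
    set g := ∑ s ∈ c.support, c₁ s * (f s - initialForm χ (f s)) with hgdef
    set F := ∑ s ∈ c.support, c₁ s * f s with hF
    have hsum' : ∑ s ∈ c.support, c s * initialForm χ (f s) = 1 := by
      rw [← hsum, Finsupp.sum]
      exact Finset.sum_congr rfl fun s hs => by rw [← hfin s hs, smul_eq_mul]
    have hone : A + B = 1 := by
      rw [hA, hB, ← Finset.sum_add_distrib, ← hsum']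
      exact Finset.sum_congr rfl fun s hs => by rw [← add_mul, ← hsplit s]
    have hAsupp : ∀ h ∈ A.coeff.support, χ h = 0 := by
      intro h hh
      rw [hA, coeff_sum] at hh
      obtain ⟨s, hs, hterm⟩ := Finsupp.mem_support_finset_sum h hh
      obtain ⟨x, hx, y, hy, rfl⟩ := hmul _ _ _ hterm
      rw [map_add, hsuppc₁ s x hx, hd1 s hs y hy]
      ring
    have hBsupp : ∀ h ∈ B.coeff.support, ¬ χ h = 0 := by
      intro h hh
      rw [hB, coeff_sum] at hh
      obtain ⟨s, hs, hterm⟩ := Finsupp.mem_support_finset_sum h hh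
      obtain ⟨x, hx, y, hy, rfl⟩ := hmul _ _ _ hterm
      have h2 := hd1 s hs y hy
      have h3 := hsuppc₂ s x hx
      rw [map_add, h2]
      intro heq
      exact h3 (by linarith)
    have hgsupp : ∀ h ∈ g.coeff.support, 0 < χ h := by
      intro h hh
      rw [hgdef, coeff_sum] at hh
      obtain ⟨s, hs, hterm⟩ := Finsupp.mem_support_finset_sum h hh
      obtain ⟨x, hx, y, hy, rfl⟩ := hmul _ _ _ hterm
      have h2 := hd2 s hs y hy
      have h3 := hsuppc₁ s x hx
      rw [map_add, h3]
      linarith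
    have hA1 : A = 1 := by
      ext h
      by_cases hχ : χ h = 0
      · have hBh : B.coeff h = 0 := by
          by_contra hB0
          exact hBsupp h (Finsupp.mem_support_iff.mpr hB0) hχ
        have h2 := congrArg (fun t : AddMonoidAlgebra R H => t.coeff h) hone
        simpa [AMA.add_apply, hBh] using h2
      · have hAh : A.coeff h = 0 := by
          by_contra hA0
          exact hχ (hAsupp h (Finsupp.mem_support_iff.mpr hA0))
        have h1h : (1 : AddMonoidAlgebra R H).coeff h = 0 := by
          rw [AMA.one_apply, if_neg]
          intro h0
          subst h0
          simp at hχ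
        rw [hAh, h1h]
    have hFA : F = A + g := by
      rw [hF, hA, hgdef, ← Finset.sum_add_distrib]
      exact Finset.sum_congr rfl fun s hs => by ring
    have hFI : F ∈ I := by
      rw [hF]
      exact Ideal.sum_mem I fun s hs => I.mul_mem_left _ (hfI s hs)
    exact ⟨F, ⟨g, hgsupp, by rw [hFA, hA1]⟩, hFI⟩
end

section
/- Let R be a commutative Noetherian ring with unity, ψ : H → H' a surjective homomorphism of finitely generated abelian groups where H' has positive rank, ψ_* : RH → RH' the induced ring epimorphism of group algebras, and I' a proper ideal of RH'. Then Trop_R(ψ_*^{-1}(I')) = ψ^*(Trop_R(I')); explicitly, for every group homomorphism χ : H → ℝ, in_χ(ψ_*^{-1}(I')) ≠ RH if and only if there exists χ' : H' → ℝ with χ = χ' ∘ ψ and in_{χ'}(I') ≠ RH'. -/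
open AddMonoidAlgebra

/-- Coefficient-level version of `initialForm`. -/
noncomputable def initialFormF {R H : Type*} [CommRing R] [AddCommGroup H] (χ : H →+ ℝ)
    (f : H →₀ R) : H →₀ R :=
  haveI : DecidablePred (fun h => ∀ h' ∈ f.support, χ h ≤ χ h') := Classical.decPred _
  Finsupp.filter (fun h => ∀ h' ∈ f.support, χ h ≤ χ h') f

section Aux

open Finsupp

variable {R H H' : Type*} [CommRing R] [AddCommGroup H] [AddCommGroup H']

lemma initialForm_apply_of_pos {χ : H →+ ℝ} {f : H →₀ R} {h : H}
    (hP : ∀ h' ∈ f.support, χ h ≤ χ h') : initialFormF χ f h = f h := by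
  rw [initialFormF]; exact if_pos hP

lemma initialForm_apply_of_neg {χ : H →+ ℝ} {f : H →₀ R} {h : H}
    (hP : ¬ ∀ h' ∈ f.support, χ h ≤ χ h') : initialFormF χ f h = 0 := by
  rw [initialFormF]; exact if_neg hP

lemma mem_support_initialForm {χ : H →+ ℝ} {f : H →₀ R} {h : H} :
    h ∈ (initialFormF χ f).support ↔ h ∈ f.support ∧ ∀ h' ∈ f.support, χ h ≤ χ h' := by
  by_cases hP : ∀ h' ∈ f.support, χ h ≤ χ h'
  · rw [Finsupp.mem_support_iff, initialForm_apply_of_pos hP, ← Finsupp.mem_support_iff]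
    exact ⟨fun h1 => ⟨h1, hP⟩, fun h1 => h1.1⟩
  · rw [Finsupp.mem_support_iff, initialForm_apply_of_neg hP]
    simp only [ne_eq, not_true_eq_false, false_iff]
    exact fun hc => hP hc.2

lemma mem_support_rest {χ : H →+ ℝ} {f : H →₀ R} {h : H} :
    h ∈ (f - initialFormF χ f).support ↔
      h ∈ f.support ∧ ¬ ∀ h' ∈ f.support, χ h ≤ χ h' := by
  by_cases hP : ∀ h' ∈ f.support, χ h ≤ χ h'
  · rw [Finsupp.mem_support_iff, Finsupp.sub_apply, initialForm_apply_of_pos hP]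
    simp only [sub_self, ne_eq, not_true_eq_false, false_iff]
    exact fun hc => hc.2 hP
  · rw [Finsupp.mem_support_iff, Finsupp.sub_apply, initialForm_apply_of_neg hP,
      sub_zero, ← Finsupp.mem_support_iff]
    exact ⟨fun h1 => ⟨h1, hP⟩, fun h1 => h1.1⟩

lemma initialForm_zero (χ : H →+ ℝ) : initialFormF χ (0 : H →₀ R) = 0 := by
  ext h
  rw [initialForm_apply_of_pos (by simp)]

end Aux

section Levels

open Finsupp

variable {R H H' : Type*} [CommRing R] [AddCommGroup H] [AddCommGroup H']

/-- Values of `χ'` on the support of the pushforward of the initial form / of the rest. -/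
lemma levels (ψ : H →+ H') (χ' : H' →+ ℝ) (f : H →₀ R) {m : H}
    (hm : m ∈ f.support) (hmin : ∀ b ∈ f.support, χ' (ψ m) ≤ χ' (ψ b)) :
    (∀ h' ∈ (Finsupp.mapDomain ψ (initialFormF (χ'.comp ψ) f)).support, χ' h' = χ' (ψ m)) ∧
    (∀ h' ∈ (Finsupp.mapDomain ψ (f - initialFormF (χ'.comp ψ) f)).support,
      χ' (ψ m) < χ' h') := by
  classical
  constructor
  · intro h' hh'
    obtain ⟨a, ha, rfl⟩ := Finset.mem_image.mp (Finsupp.mapDomain_support hh')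
    obtain ⟨haf, hamin⟩ := mem_support_initialForm.mp ha
    exact le_antisymm (hamin m hm) (hmin a haf)
  · intro h' hh'
    obtain ⟨a, ha, rfl⟩ := Finset.mem_image.mp (Finsupp.mapDomain_support hh')
    obtain ⟨haf, hnot⟩ := mem_support_rest.mp ha
    push_neg at hnot
    obtain ⟨b, hbf, hb⟩ := hnot
    calc χ' (ψ m) ≤ (χ'.comp ψ) b := hmin b hbf
    _ < (χ'.comp ψ) a := hb
    _ = χ' (ψ a) := rfl

/-- If the pushforward of the initial form is nonzero, it is the initial form of the
pushforward. -/
lemma pushforward_initialForm (ψ : H →+ H') (χ' : H' →+ ℝ) (f : H →₀ R)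
    (hg : Finsupp.mapDomain ψ (initialFormF (χ'.comp ψ) f) ≠ 0) :
    Finsupp.mapDomain ψ f ≠ 0 ∧
      initialFormF χ' (Finsupp.mapDomain ψ f) =
        Finsupp.mapDomain ψ (initialFormF (χ'.comp ψ) f) := by
  classical
  set χ : H →+ ℝ := χ'.comp ψ with hχ
  have hf : f ≠ 0 := by
    rintro rfl
    rw [initialForm_zero, Finsupp.mapDomain_zero] at hg
    exact hg rfl
  obtain ⟨m, hm, hmin⟩ := Finset.exists_min_image f.support (fun a => χ' (ψ a))
    (Finsupp.support_nonempty_iff.mpr hf)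
  obtain ⟨hlg, hlr⟩ := levels ψ χ' f hm hmin
  set g : H' →₀ R := Finsupp.mapDomain ψ (initialFormF χ f) with hgdef
  set r : H' →₀ R := Finsupp.mapDomain ψ (f - initialFormF χ f) with hrdef
  have hsum : Finsupp.mapDomain ψ f = g + r := by
    rw [hgdef, hrdef, ← Finsupp.mapDomain_add, add_sub_cancel]
  have hdisj : ∀ h', h' ∈ g.support → h' ∉ r.support := by
    intro h' h1 h2
    exact absurd (hlg h' h1) (ne_of_gt (hlr h' h2))
  -- some element of the support of g
  obtain ⟨h₀, hh₀⟩ := Finsupp.support_nonempty_iff.mpr hg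
  have hfne : Finsupp.mapDomain ψ f ≠ 0 := by
    intro hz
    have : g h₀ + r h₀ = 0 := by rw [← Finsupp.add_apply, ← hsum, hz]; rfl
    have hr0 : r h₀ = 0 := Finsupp.notMem_support_iff.mp (hdisj h₀ hh₀)
    rw [hr0, add_zero] at this
    exact Finsupp.mem_support_iff.mp hh₀ this
  refine ⟨hfne, ?_⟩
  ext h'
  by_cases hmem : h' ∈ g.support
  · have hrz : r h' = 0 := Finsupp.notMem_support_iff.mp (hdisj h' hmem)
    have hP : ∀ h'' ∈ (Finsupp.mapDomain ψ f).support, χ' h' ≤ χ' h'' := by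
      intro h'' hh''
      rw [hsum] at hh''
      rcases Finset.mem_union.mp (Finsupp.support_add hh'') with hc | hc
      · rw [hlg h' hmem, hlg h'' hc]
      · rw [hlg h' hmem]; exact le_of_lt (hlr h'' hc)
    rw [initialForm_apply_of_pos hP, hsum, Finsupp.add_apply, hrz, add_zero]
  · have hgz : g h' = 0 := Finsupp.notMem_support_iff.mp hmem
    rw [hgz]
    by_cases hP : ∀ h'' ∈ (Finsupp.mapDomain ψ f).support, χ' h' ≤ χ' h''
    · rw [initialForm_apply_of_pos hP, hsum, Finsupp.add_apply, hgz, zero_add]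
      by_contra hrne
      have hrs : h' ∈ r.support := Finsupp.mem_support_iff.mpr hrne
      have h1 : χ' (ψ m) < χ' h' := hlr h' hrs
      have h2 : χ' h' ≤ χ' h₀ := by
        apply hP
        rw [hsum]
        rw [Finsupp.mem_support_iff, Finsupp.add_apply,
          Finsupp.notMem_support_iff.mp (hdisj h₀ hh₀), add_zero]
        exact Finsupp.mem_support_iff.mp hh₀
      rw [hlg h₀ hh₀] at h2
      linarith
    · rw [initialForm_apply_of_neg hP]

/-- If the pushforward of `f` is zero then so is the pushforward of its initial form. -/
lemma pushforward_initialForm_zero (ψ : H →+ H') (χ' : H' →+ ℝ) (f : H →₀ R)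
    (hf : Finsupp.mapDomain ψ f = 0) :
    Finsupp.mapDomain ψ (initialFormF (χ'.comp ψ) f) = 0 := by
  by_contra hg
  obtain ⟨hne, -⟩ := pushforward_initialForm ψ χ' f hg
  exact hne hf

end Levels

section Main

open Finsupp

variable {R H H' : Type*} [CommRing R] [AddCommGroup H] [AddCommGroup H']

lemma mapDomainRingHom_eq (ψ : H →+ H') (f : H →₀ R) :
    AddMonoidAlgebra.mapDomainRingHom R ψ (AddMonoidAlgebra.ofCoeff f) =
      AddMonoidAlgebra.ofCoeff (Finsupp.mapDomain ψ f) := rfl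

/-- Pulling back along a set-theoretic section commutes with initial forms. -/
lemma initialForm_mapDomain_section (ψ : H →+ H') (χ' : H' →+ ℝ) (s : H' → H)
    (hs : ∀ x, ψ (s x) = x) (f' : H' →₀ R) :
    initialFormF (χ'.comp ψ) (Finsupp.mapDomain s f') =
      Finsupp.mapDomain s (initialFormF χ' f') := by
  classical
  have hinj : Function.Injective s := fun a b hab => by rw [← hs a, ← hs b, hab]
  ext h
  by_cases hr : h ∈ Set.range s
  · obtain ⟨a, rfl⟩ := hr
    rw [Finsupp.mapDomain_apply hinj]
    have hsupp : (Finsupp.mapDomain s f').support = f'.support.image s :=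
      Finsupp.mapDomain_support_of_injective hinj _
    have hiff : (∀ h' ∈ (Finsupp.mapDomain s f').support, (χ'.comp ψ) (s a) ≤ (χ'.comp ψ) h')
        ↔ (∀ b ∈ f'.support, χ' a ≤ χ' b) := by
      rw [hsupp]
      constructor
      · intro hP b hb
        have := hP (s b) (Finset.mem_image_of_mem s hb)
        simpa [hs] using this
      · intro hP h' hh'
        obtain ⟨b, hb, rfl⟩ := Finset.mem_image.mp hh'
        simpa [hs] using hP b hb
    by_cases hP : ∀ b ∈ f'.support, χ' a ≤ χ' b
    · rw [initialForm_apply_of_pos (hiff.mpr hP), initialForm_apply_of_pos hP,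
        Finsupp.mapDomain_apply hinj]
    · rw [initialForm_apply_of_neg (fun hc => hP (hiff.mp hc)), initialForm_apply_of_neg hP]
  · have h1 : Finsupp.mapDomain s f' h = 0 := Finsupp.mapDomain_notin_range _ _ hr
    have h2 : Finsupp.mapDomain s (initialFormF χ' f') h = 0 :=
      Finsupp.mapDomain_notin_range _ _ hr
    rw [h2]
    by_cases hP : ∀ h' ∈ (Finsupp.mapDomain s f').support,
        (χ'.comp ψ) h ≤ (χ'.comp ψ) h'
    · rw [initialForm_apply_of_pos hP, h1]
    · rw [initialForm_apply_of_neg hP]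

lemma mapDomain_section (ψ : H →+ H') (s : H' → H) (hs : ∀ x, ψ (s x) = x)
    (f' : H' →₀ R) :
    Finsupp.mapDomain ψ (Finsupp.mapDomain s f') = f' := by
  rw [← Finsupp.mapDomain_comp]
  have : (⇑ψ ∘ s) = id := funext fun x => hs x
  rw [this, Finsupp.mapDomain_id]

/-- Elements of the kernel of the pushforward lie in the initial ideal of the pullback
ideal, provided the character factors. -/
lemma ker_mem_initialIdeal (ψ : H →+ H') (χ' : H' →+ ℝ)
    (I' : Ideal (AddMonoidAlgebra R H')) :
    ∀ (n : ℕ) (f : H →₀ R), f.support.card ≤ n →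
      Finsupp.mapDomain ψ f = 0 →
      AddMonoidAlgebra.ofCoeff f ∈ initialIdeal (χ'.comp ψ) (Ideal.comap (AddMonoidAlgebra.mapDomainRingHom R ψ) I') := by
  classical
  intro n
  induction n with
  | zero =>
    intro f hcard _
    have : f = 0 := by
      rwa [Nat.le_zero, Finset.card_eq_zero, Finsupp.support_eq_empty] at hcard
    rw [this]; exact Ideal.zero_mem _
  | succ n ih =>
    intro f hcard hker
    by_cases hf : f = 0
    · rw [hf]; exact Ideal.zero_mem _
    · set χ : H →+ ℝ := χ'.comp ψ with hχ
      obtain ⟨m, hm, hmin⟩ := Finset.exists_min_image f.support (fun a => χ' (ψ a))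
        (Finsupp.support_nonempty_iff.mpr hf)
      have hfI : AddMonoidAlgebra.ofCoeff f ∈ Ideal.comap (AddMonoidAlgebra.mapDomainRingHom R ψ) I' := by
        rw [Ideal.mem_comap, mapDomainRingHom_eq, hker]; exact Ideal.zero_mem _
      have hin : AddMonoidAlgebra.ofCoeff (initialFormF χ f) ∈
          initialIdeal χ (Ideal.comap (AddMonoidAlgebra.mapDomainRingHom R ψ) I') :=
        Ideal.subset_span ⟨AddMonoidAlgebra.ofCoeff f, hfI,
          by rwa [Ne, AddMonoidAlgebra.ofCoeff_eq_zero], rfl⟩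
      have hrestker : Finsupp.mapDomain ψ (f - initialFormF χ f) = 0 := by
        have h1 : Finsupp.mapDomain ψ (initialFormF χ f) = 0 :=
          pushforward_initialForm_zero ψ χ' f hker
        have hsub' : Finsupp.mapDomain (⇑ψ) (f - initialFormF χ f)
            = Finsupp.mapDomain (⇑ψ) f - Finsupp.mapDomain (⇑ψ) (initialFormF χ f) :=
          map_sub (Finsupp.mapDomain.addMonoidHom ψ) _ _
        rw [hsub', h1, hker, sub_zero]
      have hsub : (f - initialFormF χ f).support ⊆ f.support.erase m := by
        intro x hx
        obtain ⟨hxf, hnot⟩ := mem_support_rest.mp hx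
        refine Finset.mem_erase.mpr ⟨?_, hxf⟩
        rintro rfl
        exact hnot hmin
      have hcard' : (f - initialFormF χ f).support.card ≤ n := by
        calc (f - initialFormF χ f).support.card ≤ (f.support.erase m).card :=
              Finset.card_le_card hsub
        _ = f.support.card - 1 := Finset.card_erase_of_mem hm
        _ ≤ n := by omega
      have hrest := ih (f - initialFormF χ f) hcard' hrestker
      have := Ideal.add_mem _ hin hrest
      rwa [← AddMonoidAlgebra.ofCoeff_add, add_sub_cancel] at this

/-- Initial form of `single 0 1 + single k (-1)` when `χ k < 0`. -/
lemma initialForm_binomial [Nontrivial R] (χ : H →+ ℝ) (k : H) (hk : χ k < 0) :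
    initialFormF χ (Finsupp.single 0 (1 : R) + Finsupp.single k (-1 : R)) =
      Finsupp.single k (-1 : R) := by
  classical
  have hk0 : k ≠ 0 := by rintro rfl; rw [map_zero] at hk; linarith
  set f : H →₀ R := Finsupp.single 0 (1 : R) + Finsupp.single k (-1 : R)
    with hfdef
  have hk0' : (0 : H) ≠ k := Ne.symm hk0
  have hf0 : f 0 = 1 := by
    rw [hfdef, Finsupp.add_apply, Finsupp.single_eq_same, Finsupp.single_eq_of_ne' hk0,
      add_zero]
  have hfk : f k = -1 := by
    rw [hfdef, Finsupp.add_apply, Finsupp.single_eq_of_ne' hk0', Finsupp.single_eq_same,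
      zero_add]
  have hfother : ∀ h, h ≠ 0 → h ≠ k → f h = 0 := by
    intro h h0 hkh
    rw [hfdef, Finsupp.add_apply, Finsupp.single_eq_of_ne' (Ne.symm h0),
      Finsupp.single_eq_of_ne' (Ne.symm hkh), add_zero]
  have hsupp : ∀ h ∈ f.support, h = 0 ∨ h = k := by
    intro h hh
    by_contra hc
    push_neg at hc
    exact Finsupp.mem_support_iff.mp hh (hfother h hc.1 hc.2)
  have hkmem : k ∈ f.support := Finsupp.mem_support_iff.mpr (by rw [hfk]; norm_num)
  ext h
  by_cases hhk : h = k
  · subst hhk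
    have hP : ∀ h' ∈ f.support, χ h ≤ χ h' := by
      intro h' hh'
      rcases hsupp h' hh' with rfl | rfl
      · rw [map_zero]; linarith
      · exact le_refl _
    rw [initialForm_apply_of_pos hP, hfk, Finsupp.single_eq_same]
  · rw [Finsupp.single_eq_of_ne' (fun hc => hhk hc.symm)]
    by_cases hh0 : h = 0
    · have hP : ¬ ∀ h' ∈ f.support, χ h ≤ χ h' := by
        intro hP
        have := hP k hkmem
        rw [hh0, map_zero] at this
        linarith
      rw [initialForm_apply_of_neg hP]
    · by_cases hP : ∀ h' ∈ f.support, χ h ≤ χ h'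
      · rw [initialForm_apply_of_pos hP, hfother h hh0 hhk]
      · rw [initialForm_apply_of_neg hP]

end Main


/-- Let `ψ : H ↠ H'` be a surjective homomorphism of finitely generated
abelian groups with `H'` of positive rank, `ψ_* : RH → RH'` the induced ring epimorphism,
and `I' ⊊ RH'` a proper ideal. Then `Trop_R(ψ_*⁻¹(I')) = ψ^*(Trop_R(I'))`: for every
character `χ : H → ℝ`, `in_χ(ψ_*⁻¹(I')) ≠ RH` iff `χ = χ' ∘ ψ` for some `χ' : H' → ℝ`
with `in_{χ'}(I') ≠ RH'`. -/
theorem trop_comap_eq_pullback_trop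
    (R : Type*) [CommRing R] [IsNoetherianRing R]
    (H H' : Type*) [AddCommGroup H] [AddGroup.FG H] [AddCommGroup H'] [AddGroup.FG H']
    [Infinite H']
    (ψ : H →+ H') (hψ : Function.Surjective ψ)
    (I' : Ideal (AddMonoidAlgebra R H')) (hI' : I' ≠ ⊤) (χ : H →+ ℝ) :
    initialIdeal χ (Ideal.comap (AddMonoidAlgebra.mapDomainRingHom R ψ) I') ≠ ⊤ ↔
      ∃ χ' : H' →+ ℝ, χ = χ'.comp ψ ∧ initialIdeal χ' I' ≠ ⊤ := by
  classical
  set φ := AddMonoidAlgebra.mapDomainRingHom R ψ with hφdef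
  set s : H' → H := fun x => (hψ x).choose with hsdef
  have hsec : ∀ x, ψ (s x) = x := fun x => (hψ x).choose_spec
  have hφ : ∀ f : AddMonoidAlgebra R H,
    φ f = AddMonoidAlgebra.ofCoeff (Finsupp.mapDomain ψ f.coeff) := fun f => rfl
  have hφsurj : Function.Surjective φ := fun f' =>
    ⟨AddMonoidAlgebra.ofCoeff (Finsupp.mapDomain s f'.coeff), by
  rw [hφ, AddMonoidAlgebra.coeff_ofCoeff, mapDomain_section ψ s hsec,
    AddMonoidAlgebra.ofCoeff_coeff]⟩
  have hRnt : Nontrivial R := by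
    by_contra hnt
    rw [not_nontrivial_iff_subsingleton] at hnt
    exact hI' (Subsingleton.elim _ _)
  constructor
  · intro hne
    have hker : ∀ k : H, ψ k = 0 → χ k = 0 := by
      intro k hk
      by_contra hknz
      obtain ⟨k₀, hk₀ψ, hk₀χ⟩ : ∃ k₀ : H, ψ k₀ = 0 ∧ χ k₀ < 0 := by
        rcases lt_or_gt_of_ne hknz with hlt | hgt
        · exact ⟨k, hk, hlt⟩
        · exact ⟨-k, by rw [map_neg, hk, neg_zero], by rw [map_neg]; linarith⟩
      have hk₀0 : k₀ ≠ 0 := by rintro rfl; rw [map_zero] at hk₀χ; linarith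
      set f : H →₀ R := Finsupp.single 0 (1:R) + Finsupp.single k₀ (-1:R)
        with hfdef
      have hfI : AddMonoidAlgebra.ofCoeff f ∈ Ideal.comap φ I' := by
        rw [Ideal.mem_comap]
        have hz : φ (AddMonoidAlgebra.ofCoeff f) = 0 := by
          rw [hφ, AddMonoidAlgebra.coeff_ofCoeff, hfdef, Finsupp.mapDomain_add, Finsupp.mapDomain_single,
            Finsupp.mapDomain_single, hk₀ψ, map_zero, ← Finsupp.single_add]
          norm_num
        rw [hz]; exact Ideal.zero_mem _
      have hf0 : f ≠ 0 := by
        intro hz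
        have h1 : f k₀ = 0 := by rw [hz]; rfl
        rw [hfdef, Finsupp.add_apply, Finsupp.single_eq_of_ne' (Ne.symm hk₀0),
          Finsupp.single_eq_same, zero_add] at h1
        exact (by norm_num : (-1 : R) ≠ 0) h1
      have hinmem : AddMonoidAlgebra.single k₀ (-1 : R) ∈ initialIdeal χ (Ideal.comap φ I') :=
        Ideal.subset_span ⟨AddMonoidAlgebra.ofCoeff f, hfI,
          by rwa [Ne, AddMonoidAlgebra.ofCoeff_eq_zero],
          congrArg AddMonoidAlgebra.ofCoeff (initialForm_binomial χ k₀ hk₀χ).symm⟩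
      set u : AddMonoidAlgebra R H := AddMonoidAlgebra.single k₀ (-1:R) with hudef
      set v : AddMonoidAlgebra R H := AddMonoidAlgebra.single (-k₀) (-1:R) with hvdef
      have hunit : IsUnit u := by
        apply IsUnit.of_mul_eq_one v
        have huv : u * v = AddMonoidAlgebra.single (k₀ + -k₀) ((-1 : R) * -1) :=
          AddMonoidAlgebra.single_mul_single _ _ _ _
        rw [huv, add_neg_cancel, neg_mul_neg, one_mul]
        exact AddMonoidAlgebra.one_def.symm
      exact hne (Ideal.eq_top_of_isUnit_mem _ hinmem hunit)
    have hkerm : ψ.ker ≤ χ.ker := fun x hx => AddMonoidHom.mem_ker.mpr (hker x hx)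
    set e := QuotientAddGroup.quotientKerEquivOfSurjective ψ hψ with hedef
    set χ'0 := QuotientAddGroup.lift ψ.ker χ hkerm with hχ'0def
    set χ' := χ'0.comp e.symm.toAddMonoidHom with hχ'def
    have hcomp : χ = χ'.comp ψ := by
      ext x
      have h1 : e ((QuotientAddGroup.mk x : H ⧸ ψ.ker)) = ψ x := rfl
      have h2 : e.symm (ψ x) = QuotientAddGroup.mk x := by
        rw [← h1, AddEquiv.symm_apply_apply]
      simp only [AddMonoidHom.comp_apply, hχ'def, AddEquiv.coe_toAddMonoidHom, h2, hχ'0def]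
      rw [QuotientAddGroup.lift_mk]
    refine ⟨χ', hcomp, ?_⟩
    intro htop
    apply hne
    have hle : initialIdeal χ' I' ≤ Ideal.map φ (initialIdeal χ (Ideal.comap φ I')) := by
      rw [initialIdeal, Ideal.span_le]
      rintro g ⟨f', hf'I, hf'0, rfl⟩
      have hfact : initialForm χ' f' =
          φ (initialForm χ (AddMonoidAlgebra.ofCoeff (Finsupp.mapDomain s f'.coeff))) := by
        rw [hcomp]
        show _ = AddMonoidAlgebra.ofCoeff (Finsupp.mapDomain ψ
          (initialFormF (χ'.comp ψ) (Finsupp.mapDomain s f'.coeff)))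
        rw [initialForm_mapDomain_section ψ χ' s hsec f'.coeff, mapDomain_section ψ s hsec]
        rfl
      rw [hfact]
      apply Ideal.mem_map_of_mem
      apply Ideal.subset_span
      refine ⟨AddMonoidAlgebra.ofCoeff (Finsupp.mapDomain s f'.coeff), ?_, ?_, rfl⟩
      · rw [Ideal.mem_comap, hφ, AddMonoidAlgebra.coeff_ofCoeff, mapDomain_section ψ s hsec,
          AddMonoidAlgebra.ofCoeff_coeff]; exact hf'I
      · intro hz
        apply hf'0
        rw [AddMonoidAlgebra.ofCoeff_eq_zero] at hz
        rw [← AddMonoidAlgebra.coeff_eq_zero, ← mapDomain_section ψ s hsec f'.coeff, hz,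
          Finsupp.mapDomain_zero]
    have hmap : Ideal.map φ (initialIdeal χ (Ideal.comap φ I')) = ⊤ := by
      rw [← top_le_iff, ← htop]; exact hle
    have hcm := Ideal.comap_map_of_surjective φ hφsurj (initialIdeal χ (Ideal.comap φ I'))
    have hkerle : Ideal.comap φ ⊥ ≤ initialIdeal χ (Ideal.comap φ I') := by
      intro x hx
      rw [Ideal.mem_comap, Ideal.mem_bot] at hx
      have hmem := ker_mem_initialIdeal ψ χ' I' x.coeff.support.card x.coeff le_rfl
        (by rw [hφ x] at hx; exact AddMonoidAlgebra.ofCoeff_eq_zero.mp hx)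
      rwa [← hcomp, AddMonoidAlgebra.ofCoeff_coeff] at hmem
    rw [hmap, Ideal.comap_top, sup_eq_left.mpr hkerle] at hcm
    exact hcm.symm
  · rintro ⟨χ', rfl, hni'⟩
    intro htop
    apply hni'
    have hle : Ideal.map φ (initialIdeal (χ'.comp ψ) (Ideal.comap φ I')) ≤
        initialIdeal χ' I' := by
      rw [Ideal.map_le_iff_le_comap, initialIdeal, Ideal.span_le]
      rintro g ⟨f, hfI, hf0, rfl⟩
      rw [SetLike.mem_coe, Ideal.mem_comap, hφ]
      change AddMonoidAlgebra.ofCoeff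
        (Finsupp.mapDomain ψ (initialFormF (χ'.comp ψ) f.coeff)) ∈ _
      by_cases hz : Finsupp.mapDomain ψ (initialFormF (χ'.comp ψ) f.coeff) = 0
      · rw [hz, AddMonoidAlgebra.ofCoeff_zero]; exact Ideal.zero_mem _
      · obtain ⟨hne0, heq⟩ := pushforward_initialForm ψ χ' f.coeff hz
        apply Ideal.subset_span
        exact ⟨AddMonoidAlgebra.ofCoeff (Finsupp.mapDomain ψ f.coeff),
          by rw [Ideal.mem_comap, hφ] at hfI; exact hfI,
          by rwa [Ne, AddMonoidAlgebra.ofCoeff_eq_zero],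
          congrArg AddMonoidAlgebra.ofCoeff heq.symm⟩
    rw [htop, Ideal.map_top, top_le_iff] at hle
    exact hle
end

section
/- Let k be a field equipped with a ring valuation v, let ψ : H̃ → H be a surjective homomorphism of finitely generated abelian groups, let ψ_* : kH̃ → kH be the induced ring epimorphism of group algebras, let I be a proper ideal of kH, and let Ĩ = ψ_*^{-1}(I). Then Δ^v_{Ĩ}(H̃) = ψ^*(Δ^v_I(H)); explicitly, a group homomorphism χ̃ : H̃ → ℝ lies in Δ^v_{Ĩ}(H̃) if and only if there exists χ ∈ Δ^v_I(H) with χ̃ = χ ∘ ψ. -/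
open AddMonoidAlgebra

/-- `χ ∈ Δ^v_J(A)`: there is a ring valuation on `kA/J` extending the valuation `v` of `k`
and restricting to the character `χ` on `A`. -/
def MemDelta {k A : Type*} [Field k] [AddCommGroup A] (v : k → WithTop ℝ)
    (J : Ideal (AddMonoidAlgebra k A)) (χ : A →+ ℝ) : Prop :=
  ∃ w : (AddMonoidAlgebra k A ⧸ J) → WithTop ℝ, IsRingValuation w ∧
    (∀ c : k, w (Ideal.Quotient.mk J (algebraMap k (AddMonoidAlgebra k A) c)) = v c) ∧
    (∀ a : A, w (Ideal.Quotient.mk J (AddMonoidAlgebra.of' k A a)) = ((χ a : ℝ) : WithTop ℝ))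

/-- Transport of a ring valuation along a ring isomorphism. -/
lemma IsRingValuation.comp_equiv {A B : Type*} [CommRing A] [CommRing B]
    {w : B → WithTop ℝ} (hw : IsRingValuation w) (e : A ≃+* B) :
    IsRingValuation (w ∘ e) := by
  constructor
  · intro a b; simp [hw.map_mul]
  · intro a b; simp [hw.min_le_map_add]
  · simp [hw.map_zero]
  · simp [hw.map_one]

/-- Let `k` be a field with a ring valuation `v`, `ψ : H̃ ↠ H` a surjective
homomorphism of finitely generated abelian groups, `I ⊊ kH` a proper ideal and
`Ĩ = ψ_*⁻¹(I)`. Then `Δ^v_{Ĩ}(H̃) = ψ^*(Δ^v_I(H))`: a character `χ̃ : H̃ → ℝ` lies in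
`Δ^v_{Ĩ}(H̃)` iff `χ̃ = χ ∘ ψ` for some `χ ∈ Δ^v_I(H)`. -/
theorem memDelta_comap_iff_pullback
    (k : Type*) [Field k] (v : k → WithTop ℝ) (hv : IsRingValuation v)
    (Htil H : Type*) [AddCommGroup Htil] [AddGroup.FG Htil] [AddCommGroup H] [AddGroup.FG H]
    (ψ : Htil →+ H) (hψ : Function.Surjective ψ)
    (I : Ideal (AddMonoidAlgebra k H)) (hI : I ≠ ⊤) (χtil : Htil →+ ℝ) :
    MemDelta v (Ideal.comap (AddMonoidAlgebra.mapDomainRingHom k ψ) I) χtil ↔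
      ∃ χ : H →+ ℝ, MemDelta v I χ ∧ χtil = χ.comp ψ := by
  classical
  set f : AddMonoidAlgebra k Htil →+* AddMonoidAlgebra k H :=
    AddMonoidAlgebra.mapDomainRingHom k ψ with hfdef
  set Itil : Ideal (AddMonoidAlgebra k Htil) := Ideal.comap f I with hItil
  -- `f` is surjective
  have hf : Function.Surjective f := by
    intro y
    refine ⟨AddMonoidAlgebra.mapDomain (Function.surjInv hψ) y, ?_⟩
    show AddMonoidAlgebra.mapDomain (⇑ψ) (AddMonoidAlgebra.mapDomain (Function.surjInv hψ) y) = y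
    apply AddMonoidAlgebra.coeff_injective
    simp only [AddMonoidAlgebra.coeff_mapDomain]
    rw [← Finsupp.mapDomain_comp]
    have : (⇑ψ) ∘ (Function.surjInv hψ) = id := by
      funext x; exact Function.surjInv_eq hψ x
    rw [this, Finsupp.mapDomain_id]
  -- the composite to the quotient
  set g : AddMonoidAlgebra k Htil →+* AddMonoidAlgebra k H ⧸ I :=
    (Ideal.Quotient.mk I).comp f with hgdef
  have hg : Function.Surjective g := (Ideal.Quotient.mk_surjective).comp hf
  have hker : RingHom.ker g = Itil := by
    rw [hgdef, ← RingHom.comap_ker, Ideal.mk_ker]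
  -- the induced isomorphism on quotients
  let e : (AddMonoidAlgebra k Htil ⧸ Itil) ≃+* (AddMonoidAlgebra k H ⧸ I) :=
    (Ideal.quotEquivOfEq hker.symm).trans (RingHom.quotientKerEquivOfSurjective hg)
  have he : ∀ x : AddMonoidAlgebra k Htil,
      e (Ideal.Quotient.mk Itil x) = Ideal.Quotient.mk I (f x) := by
    intro x
    show (RingHom.quotientKerEquivOfSurjective hg)
        ((Ideal.quotEquivOfEq hker.symm) (Ideal.Quotient.mk Itil x)) = _
    rw [Ideal.quotEquivOfEq_mk]
    exact RingHom.kerLift_mk g x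
  -- key computations for `f`
  have falg : ∀ c : k, f (algebraMap k (AddMonoidAlgebra k Htil) c)
      = algebraMap k (AddMonoidAlgebra k H) c := by
    intro c
    show AddMonoidAlgebra.mapDomain (⇑ψ) (AddMonoidAlgebra.single 0 c) = AddMonoidAlgebra.single 0 c
    rw [AddMonoidAlgebra.mapDomain_single, map_zero]
  have fof : ∀ a : Htil, f (AddMonoidAlgebra.of' k Htil a)
      = AddMonoidAlgebra.of' k H (ψ a) := by
    intro a
    show AddMonoidAlgebra.mapDomain (⇑ψ) (AddMonoidAlgebra.single a 1) = AddMonoidAlgebra.single (ψ a) 1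
    rw [AddMonoidAlgebra.mapDomain_single]
  constructor
  · rintro ⟨wtil, hwtil, hwc, hwa⟩
    -- χtil vanishes on the kernel of ψ
    have hker' : ∀ a : Htil, ψ a = 0 → χtil a = 0 := by
      intro a ha
      have hmem : AddMonoidAlgebra.of' k Htil a - 1 ∈ Itil := by
        rw [← hker, RingHom.mem_ker, map_sub, map_one, hgdef, RingHom.comp_apply, fof, ha]
        simp [AddMonoidAlgebra.of'_apply, ← AddMonoidAlgebra.one_def]
      have : Ideal.Quotient.mk Itil (AddMonoidAlgebra.of' k Htil a)
          = Ideal.Quotient.mk Itil 1 := by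
        rw [Ideal.Quotient.mk_eq_mk_iff_sub_mem]
        exact hmem
      have h0 : ((χtil a : ℝ) : WithTop ℝ) = 0 := by
        rw [← hwa a, this, map_one, hwtil.map_one]
      exact_mod_cast h0
    -- define χ on H
    let χ : H →+ ℝ :=
      ψ.liftOfRightInverse (Function.surjInv hψ) (Function.rightInverse_surjInv hψ)
        ⟨χtil, fun a ha => hker' a (by simpa using ha)⟩
    have hχψ : ∀ a : Htil, χ (ψ a) = χtil a := fun a =>
      ψ.liftOfRightInverse_comp_apply _ _ ⟨χtil, fun a ha => hker' a (by simpa using ha)⟩ a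
    refine ⟨χ, ⟨wtil ∘ e.symm, hwtil.comp_equiv e.symm, ?_, ?_⟩, ?_⟩
    · intro c
      have : e.symm (Ideal.Quotient.mk I (algebraMap k (AddMonoidAlgebra k H) c))
          = Ideal.Quotient.mk Itil (algebraMap k (AddMonoidAlgebra k Htil) c) := by
        rw [← falg c, ← he, RingEquiv.symm_apply_apply]
      simp only [Function.comp_apply]
      rw [this]
      exact hwc c
    · intro a
      obtain ⟨atil, rfl⟩ := hψ a
      have : e.symm (Ideal.Quotient.mk I (AddMonoidAlgebra.of' k H (ψ atil)))
          = Ideal.Quotient.mk Itil (AddMonoidAlgebra.of' k Htil atil) := by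
        rw [← fof atil, ← he, RingEquiv.symm_apply_apply]
      simp only [Function.comp_apply, this, hwa atil, hχψ atil]
    · ext a
      simp [hχψ a]
  · rintro ⟨χ, ⟨w, hw, hwc, hwa⟩, hχtil⟩
    refine ⟨w ∘ e, hw.comp_equiv e, ?_, ?_⟩
    · intro c
      simp only [Function.comp_apply, he, falg]
      exact hwc c
    · intro a
      simp only [Function.comp_apply, he, fof]
      rw [hwa (ψ a), hχtil]
      simp
end

section
/- Let H be a finitely generated abelian group, I an ideal of the integral group ring ℤH, and let v be either the trivial valuation (v(n) = 0 for all nonzero n, extended to ℚ by v(q) = 0 for q ≠ 0) or the p-adic valuation for a prime p (on ℤ and on ℚ). Let κ : ℤH → ℤH/I and κ' : ℚH → ℚH/(I·ℚH) be the quotient maps, where I·ℚH is the ideal of ℚH generated by the image of I. Then for every group homomorphism χ : H → ℝ, there exists a ring valuation w on ℤH/I with w(κ(n·1)) = v(n) for all n ∈ ℤ and w(κ(h)) = χ(h) for all h ∈ H, if and only if there exists a ring valuation w' on ℚH/(I·ℚH) with w'(κ'(q·1)) = v(q) for all q ∈ ℚ and w'(κ'(h)) = χ(h) for all h ∈ H.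 -/
open AddMonoidAlgebra

/-- The coefficient-extension ring homomorphism `ℤH → ℚH` (the unique ring map sending each
group element `h` to itself and acting on coefficients by the inclusion `ℤ ⊆ ℚ`). -/
noncomputable def intToRatGroupAlgebra (H : Type*) [AddCommGroup H] :
    AddMonoidAlgebra ℤ H →+* AddMonoidAlgebra ℚ H :=
  (AddMonoidAlgebra.lift ℤ (AddMonoidAlgebra ℚ H) H (AddMonoidAlgebra.of ℚ H)).toRingHom

section Aux
variable {H : Type*} [AddCommGroup H]

lemma iota_of' (h : H) : intToRatGroupAlgebra H (of' ℤ H h) = of' ℚ H h := by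
  simp [intToRatGroupAlgebra, of'_eq_of, lift_of]

lemma iota_single (a : H) (n : ℤ) :
    intToRatGroupAlgebra H (AddMonoidAlgebra.single a n) = AddMonoidAlgebra.single a (n : ℚ) := by
  have : (AddMonoidAlgebra.single a n : AddMonoidAlgebra ℤ H) = n • of' ℤ H a := by
    simp [of'_apply, AddMonoidAlgebra.smul_single]
  rw [this, map_zsmul, iota_of', of'_apply, AddMonoidAlgebra.smul_single]
  simp

lemma iota_injective : Function.Injective (intToRatGroupAlgebra H) := by
  have key : ∀ x : AddMonoidAlgebra ℤ H, ∀ a : H,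
      (intToRatGroupAlgebra H x).coeff a = ((x.coeff a : ℤ) : ℚ) := by
    intro x
    induction x using AddMonoidAlgebra.induction_linear with
    | zero => simp
    | add f g hf hg =>
      intro a
      rw [map_add, coeff_add, coeff_add, Finsupp.add_apply, Finsupp.add_apply, hf a, hg a, Int.cast_add]
    | single b n =>
      intro a
      classical
      rw [iota_single, coeff_single, coeff_single, Finsupp.single_apply, Finsupp.single_apply]
      split <;> simp
  intro x y hxy
  ext a
  have := key x a
  rw [hxy, key y a] at this
  exact_mod_cast this.symm

lemma exists_clear (y : AddMonoidAlgebra ℚ H) :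
    ∃ m : ℕ, 0 < m ∧ ∃ x : AddMonoidAlgebra ℤ H,
      ((m : ℕ) : AddMonoidAlgebra ℚ H) * y = intToRatGroupAlgebra H x := by
  induction y using AddMonoidAlgebra.induction_linear with
  | zero => exact ⟨1, one_pos, 0, by simp⟩
  | add f g hf hg =>
    obtain ⟨m1, hm1, x1, h1⟩ := hf
    obtain ⟨m2, hm2, x2, h2⟩ := hg
    refine ⟨m1 * m2, Nat.mul_pos hm1 hm2,
      ((m2 : ℤ) : AddMonoidAlgebra ℤ H) * x1 + ((m1 : ℤ) : AddMonoidAlgebra ℤ H) * x2, ?_⟩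
    have e1 : intToRatGroupAlgebra H (((m2 : ℤ) : AddMonoidAlgebra ℤ H)) =
        ((m2 : ℕ) : AddMonoidAlgebra ℚ H) := by push_cast; exact map_natCast _ m2
    have e2 : intToRatGroupAlgebra H (((m1 : ℤ) : AddMonoidAlgebra ℤ H)) =
        ((m1 : ℕ) : AddMonoidAlgebra ℚ H) := by push_cast; exact map_natCast _ m1
    rw [map_add, map_mul, map_mul, e1, e2, ← h1, ← h2]
    push_cast
    ring
  | single a q =>
    refine ⟨q.den, q.pos, AddMonoidAlgebra.single a q.num, ?_⟩
    rw [iota_single, ← nsmul_eq_mul, AddMonoidAlgebra.smul_single]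
    congr 1
    rw [nsmul_eq_mul]
    rw [mul_comm, Rat.mul_den_eq_num]

lemma exists_clear_mem (I : Ideal (AddMonoidAlgebra ℤ H)) (z : AddMonoidAlgebra ℚ H)
    (hz : z ∈ Ideal.map (intToRatGroupAlgebra H) I) :
    ∃ m : ℕ, 0 < m ∧ ∃ x ∈ I,
      ((m : ℕ) : AddMonoidAlgebra ℚ H) * z = intToRatGroupAlgebra H x := by
  rw [Ideal.map] at hz
  refine Submodule.span_induction ?_ ?_ ?_ ?_ hz
  · rintro _ ⟨t, htI, rfl⟩
    exact ⟨1, one_pos, t, htI, by simp⟩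
  · exact ⟨1, one_pos, 0, I.zero_mem, by simp⟩
  · rintro z1 z2 - - ⟨m1, hm1, x1, hx1, h1⟩ ⟨m2, hm2, x2, hx2, h2⟩
    refine ⟨m1 * m2, Nat.mul_pos hm1 hm2,
      ((m2 : ℤ) : AddMonoidAlgebra ℤ H) * x1 + ((m1 : ℤ) : AddMonoidAlgebra ℤ H) * x2,
      I.add_mem (I.mul_mem_left _ hx1) (I.mul_mem_left _ hx2), ?_⟩
    have e1 : intToRatGroupAlgebra H (((m2 : ℤ) : AddMonoidAlgebra ℤ H)) =
        ((m2 : ℕ) : AddMonoidAlgebra ℚ H) := by push_cast; exact map_natCast _ m2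
    have e2 : intToRatGroupAlgebra H (((m1 : ℤ) : AddMonoidAlgebra ℤ H)) =
        ((m1 : ℕ) : AddMonoidAlgebra ℚ H) := by push_cast; exact map_natCast _ m1
    rw [map_add, map_mul, map_mul, e1, e2, ← h1, ← h2]
    push_cast
    ring
  · rintro r z - ⟨m, hm, x, hx, h⟩
    obtain ⟨mr, hmr, xr, hr⟩ := exists_clear r
    refine ⟨mr * m, Nat.mul_pos hmr hm, xr * x, I.mul_mem_left _ hx, ?_⟩
    have : ((mr * m : ℕ) : AddMonoidAlgebra ℚ H) * (r • z)
        = (((mr : ℕ) : AddMonoidAlgebra ℚ H) * r) * (((m : ℕ) : AddMonoidAlgebra ℚ H) * z) := by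
      rw [smul_eq_mul]; push_cast; ring
    rw [this, hr, h, ← map_mul]

lemma vcancel {v : ℚ → WithTop ℝ} (hv : IsRingValuation v) {m : ℕ} (hm : 0 < m) :
    v (m : ℚ) + v ((m : ℚ))⁻¹ = 0 := by
  rw [← hv.map_mul, mul_inv_cancel₀ (by exact_mod_cast hm.ne'), hv.map_one]

lemma wmul {I : Ideal (AddMonoidAlgebra ℤ H)} {v : ℚ → WithTop ℝ}
    {w : (AddMonoidAlgebra ℤ H ⧸ I) → WithTop ℝ} (hw : IsRingValuation w)
    (hwi : ∀ n : ℤ, w (Ideal.Quotient.mk I (n : AddMonoidAlgebra ℤ H)) = v (n : ℚ))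
    (n : ℤ) (x : AddMonoidAlgebra ℤ H) :
    w (Ideal.Quotient.mk I (((n : ℤ) : AddMonoidAlgebra ℤ H) * x))
      = v (n : ℚ) + w (Ideal.Quotient.mk I x) := by
  rw [map_mul, hw.map_mul, hwi]

lemma wd {I : Ideal (AddMonoidAlgebra ℤ H)} {v : ℚ → WithTop ℝ} (hv : IsRingValuation v)
    {w : (AddMonoidAlgebra ℤ H ⧸ I) → WithTop ℝ} (hw : IsRingValuation w)
    (hwi : ∀ n : ℤ, w (Ideal.Quotient.mk I (n : AddMonoidAlgebra ℤ H)) = v (n : ℚ))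
    {y y₂ : AddMonoidAlgebra ℚ H} {m m₂ : ℕ} {x x₂ : AddMonoidAlgebra ℤ H}
    (hm : 0 < m) (hm₂ : 0 < m₂)
    (h1 : ((m : ℕ) : AddMonoidAlgebra ℚ H) * y = intToRatGroupAlgebra H x)
    (h2 : ((m₂ : ℕ) : AddMonoidAlgebra ℚ H) * y₂ = intToRatGroupAlgebra H x₂)
    (hy : y - y₂ ∈ Ideal.map (intToRatGroupAlgebra H) I) :
    w (Ideal.Quotient.mk I x) + v ((m : ℚ))⁻¹
      = w (Ideal.Quotient.mk I x₂) + v ((m₂ : ℚ))⁻¹ := by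
  obtain ⟨m₃, hm₃, x₃, hx₃, h3⟩ := exists_clear_mem I _ hy
  have main : ((m₂ * m₃ : ℤ) : AddMonoidAlgebra ℤ H) * x
      = ((m * m₃ : ℤ) : AddMonoidAlgebra ℤ H) * x₂
        + ((m * m₂ : ℤ) : AddMonoidAlgebra ℤ H) * x₃ := by
    apply iota_injective
    rw [map_add, map_mul, map_mul, map_mul, map_intCast, map_intCast, map_intCast,
      ← h1, ← h2, ← h3]
    push_cast
    ring
  have hmk : Ideal.Quotient.mk I (((m₂ * m₃ : ℤ) : AddMonoidAlgebra ℤ H) * x)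
      = Ideal.Quotient.mk I (((m * m₃ : ℤ) : AddMonoidAlgebra ℤ H) * x₂) := by
    rw [main, map_add, Ideal.Quotient.eq_zero_iff_mem.mpr (I.mul_mem_left _ hx₃), add_zero]
  have E : v ((m₂ : ℚ)) + v ((m₃ : ℚ)) + w (Ideal.Quotient.mk I x)
      = v ((m : ℚ)) + v ((m₃ : ℚ)) + w (Ideal.Quotient.mk I x₂) := by
    have e1 := wmul hw hwi (m₂ * m₃ : ℤ) x
    have e2 := wmul hw hwi (m * m₃ : ℤ) x₂
    rw [hmk, e2] at e1
    have c1 : ((m₂ * m₃ : ℤ) : ℚ) = (m₂ : ℚ) * (m₃ : ℚ) := by push_cast; ring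
    have c2 : ((m * m₃ : ℤ) : ℚ) = (m : ℚ) * (m₃ : ℚ) := by push_cast; ring
    rw [c1, c2, hv.map_mul, hv.map_mul] at e1
    exact e1.symm
  set A := w (Ideal.Quotient.mk I x) with hA
  set B := w (Ideal.Quotient.mk I x₂) with hB
  have cm : v (m : ℚ) + v ((m : ℚ))⁻¹ = 0 := vcancel hv hm
  have cm₂ : v (m₂ : ℚ) + v ((m₂ : ℚ))⁻¹ = 0 := vcancel hv hm₂
  have cm₃ : v (m₃ : ℚ) + v ((m₃ : ℚ))⁻¹ = 0 := vcancel hv hm₃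
  have L : (v ((m₂ : ℚ)) + v ((m₃ : ℚ)) + A)
      + (v ((m : ℚ))⁻¹ + v ((m₂ : ℚ))⁻¹ + v ((m₃ : ℚ))⁻¹) = A + v ((m : ℚ))⁻¹ := by
    have : (v ((m₂ : ℚ)) + v ((m₃ : ℚ)) + A)
        + (v ((m : ℚ))⁻¹ + v ((m₂ : ℚ))⁻¹ + v ((m₃ : ℚ))⁻¹)
        = (A + v ((m : ℚ))⁻¹) + ((v (m₂ : ℚ) + v ((m₂ : ℚ))⁻¹) + (v (m₃ : ℚ) + v ((m₃ : ℚ))⁻¹)) := by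
      abel
    rw [this, cm₂, cm₃, add_zero, add_zero]
  have R : (v ((m : ℚ)) + v ((m₃ : ℚ)) + B)
      + (v ((m : ℚ))⁻¹ + v ((m₂ : ℚ))⁻¹ + v ((m₃ : ℚ))⁻¹) = B + v ((m₂ : ℚ))⁻¹ := by
    have : (v ((m : ℚ)) + v ((m₃ : ℚ)) + B)
        + (v ((m : ℚ))⁻¹ + v ((m₂ : ℚ))⁻¹ + v ((m₃ : ℚ))⁻¹)
        = (B + v ((m₂ : ℚ))⁻¹) + ((v (m : ℚ) + v ((m : ℚ))⁻¹) + (v (m₃ : ℚ) + v ((m₃ : ℚ))⁻¹)) := by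
      abel
    rw [this, cm, cm₃, add_zero, add_zero]
  rw [← L, E, R]

end Aux

/-- first reduction step of Bieri–Groves. Let `H` be a finitely generated
abelian group, `I ⊆ ℤH` an ideal, and `v` either the trivial valuation or the `p`-adic
valuation on `ℚ`. For every character `χ : H → ℝ`: there is a ring valuation `w` on `ℤH/I`
restricting to `v` on `ℤ` and to `χ` on `H`, iff there is a ring valuation `w'` on
`ℚH/(I·ℚH)` restricting to `v` on `ℚ` and to `χ` on `H`. -/
theorem exists_valuation_int_iff_exists_valuation_rat
    (H : Type*) [AddCommGroup H] [AddGroup.FG H]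
    (I : Ideal (AddMonoidAlgebra ℤ H))
    (v : ℚ → WithTop ℝ) (hv : IsRingValuation v)
    (hform : (∀ q : ℚ, q ≠ 0 → v q = 0) ∨
      (∃ p : ℕ, p.Prime ∧ ∀ q : ℚ, q ≠ 0 → v q = ((padicValRat p q : ℝ) : WithTop ℝ)))
    (χ : H →+ ℝ) :
    (∃ w : (AddMonoidAlgebra ℤ H ⧸ I) → WithTop ℝ, IsRingValuation w ∧
        (∀ n : ℤ, w (Ideal.Quotient.mk I (n : AddMonoidAlgebra ℤ H)) = v (n : ℚ)) ∧
        (∀ h : H, w (Ideal.Quotient.mk I (AddMonoidAlgebra.of' ℤ H h))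
          = ((χ h : ℝ) : WithTop ℝ))) ↔
      (∃ w' : (AddMonoidAlgebra ℚ H ⧸ Ideal.map (intToRatGroupAlgebra H) I) → WithTop ℝ,
        IsRingValuation w' ∧
        (∀ q : ℚ, w' (Ideal.Quotient.mk (Ideal.map (intToRatGroupAlgebra H) I)
          (algebraMap ℚ (AddMonoidAlgebra ℚ H) q)) = v q) ∧
        (∀ h : H, w' (Ideal.Quotient.mk (Ideal.map (intToRatGroupAlgebra H) I)
          (AddMonoidAlgebra.of' ℚ H h)) = ((χ h : ℝ) : WithTop ℝ))) := by
  classical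
  set J := Ideal.map (intToRatGroupAlgebra H) I with hJ
  constructor
  · rintro ⟨w, hw, hwi, hwh⟩
    have hex : ∀ y : AddMonoidAlgebra ℚ H, ∃ m : ℕ, ∃ x, 0 < m ∧
        ((m : ℕ) : AddMonoidAlgebra ℚ H) * y = intToRatGroupAlgebra H x := by
      intro y
      obtain ⟨m, hm, x, hx⟩ := exists_clear y
      exact ⟨m, x, hm, hx⟩
    choose mf xf hpos heq using hex
    set f : AddMonoidAlgebra ℚ H → WithTop ℝ := fun y =>
      w (Ideal.Quotient.mk I (xf y)) + v ((mf y : ℚ))⁻¹ with hf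
    have fspec : ∀ (y : AddMonoidAlgebra ℚ H) (m : ℕ) (x : AddMonoidAlgebra ℤ H), 0 < m →
        ((m : ℕ) : AddMonoidAlgebra ℚ H) * y = intToRatGroupAlgebra H x →
        f y = w (Ideal.Quotient.mk I x) + v ((m : ℚ))⁻¹ := by
      intro y m x hm hx
      exact wd hv hw hwi (hpos y) hm (heq y) hx (by rw [sub_self]; exact J.zero_mem)
    have finv : ∀ y y₂, y - y₂ ∈ J → f y = f y₂ := fun y y₂ h =>
      wd hv hw hwi (hpos y) (hpos y₂) (heq y) (heq y₂) h
    have hrepex : ∀ c : AddMonoidAlgebra ℚ H ⧸ J, ∃ y, Ideal.Quotient.mk J y = c :=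
      Ideal.Quotient.mk_surjective
    choose rep hrep using hrepex
    have w'mk : ∀ y, f (rep (Ideal.Quotient.mk J y)) = f y := by
      intro y
      apply finv
      rw [← Ideal.Quotient.eq]
      exact hrep _
    refine ⟨fun c => f (rep c), ⟨?_, ?_, ?_, ?_⟩, ?_, ?_⟩
    · -- map_mul
      intro c₁ c₂
      obtain ⟨y₁, rfl⟩ : ∃ y, Ideal.Quotient.mk J y = c₁ := ⟨rep c₁, hrep c₁⟩
      obtain ⟨y₂, rfl⟩ : ∃ y, Ideal.Quotient.mk J y = c₂ := ⟨rep c₂, hrep c₂⟩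
      show f (rep (Ideal.Quotient.mk J y₁ * Ideal.Quotient.mk J y₂)) = _
      rw [← map_mul, w'mk, w'mk, w'mk]
      have hx : ((mf y₁ * mf y₂ : ℕ) : AddMonoidAlgebra ℚ H) * (y₁ * y₂)
          = intToRatGroupAlgebra H (xf y₁ * xf y₂) := by
        rw [map_mul, ← heq y₁, ← heq y₂]; push_cast; ring
      rw [fspec _ _ _ (Nat.mul_pos (hpos y₁) (hpos y₂)) hx, hf]
      simp only
      rw [map_mul, hw.map_mul]
      have hvsplit : v (((mf y₁ * mf y₂ : ℕ) : ℚ))⁻¹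
          = v ((mf y₁ : ℚ))⁻¹ + v ((mf y₂ : ℚ))⁻¹ := by
        rw [show (((mf y₁ * mf y₂ : ℕ) : ℚ))⁻¹ = ((mf y₁ : ℚ))⁻¹ * ((mf y₂ : ℚ))⁻¹ by
          push_cast; ring, hv.map_mul]
      rw [hvsplit]
      abel
    · -- min_le_map_add
      intro c₁ c₂
      obtain ⟨y₁, rfl⟩ : ∃ y, Ideal.Quotient.mk J y = c₁ := ⟨rep c₁, hrep c₁⟩
      obtain ⟨y₂, rfl⟩ : ∃ y, Ideal.Quotient.mk J y = c₂ := ⟨rep c₂, hrep c₂⟩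
      show min (f (rep (Ideal.Quotient.mk J y₁))) (f (rep (Ideal.Quotient.mk J y₂)))
          ≤ f (rep (Ideal.Quotient.mk J y₁ + Ideal.Quotient.mk J y₂))
      rw [← map_add, w'mk, w'mk, w'mk]
      have hx : ((mf y₁ * mf y₂ : ℕ) : AddMonoidAlgebra ℚ H) * (y₁ + y₂)
          = intToRatGroupAlgebra H
            (((mf y₂ : ℤ) : AddMonoidAlgebra ℤ H) * xf y₁
              + ((mf y₁ : ℤ) : AddMonoidAlgebra ℤ H) * xf y₂) := by
        rw [map_add, map_mul, map_mul, map_intCast, map_intCast, ← heq y₁, ← heq y₂]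
        push_cast; ring
      rw [fspec _ _ _ (Nat.mul_pos (hpos y₁) (hpos y₂)) hx]
      set A := w (Ideal.Quotient.mk I (xf y₁)) with hA
      set B := w (Ideal.Quotient.mk I (xf y₂)) with hB
      set c := v (((mf y₁ * mf y₂ : ℕ) : ℚ))⁻¹ with hc
      have hvsplit : c = v ((mf y₁ : ℚ))⁻¹ + v ((mf y₂ : ℚ))⁻¹ := by
        rw [hc, show (((mf y₁ * mf y₂ : ℕ) : ℚ))⁻¹ = ((mf y₁ : ℚ))⁻¹ * ((mf y₂ : ℚ))⁻¹ by
          push_cast; ring, hv.map_mul]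
      have step1 : min (v ((mf y₂ : ℕ) : ℚ) + A) (v ((mf y₁ : ℕ) : ℚ) + B)
          ≤ w (Ideal.Quotient.mk I (((mf y₂ : ℤ) : AddMonoidAlgebra ℤ H) * xf y₁
              + ((mf y₁ : ℤ) : AddMonoidAlgebra ℤ H) * xf y₂)) := by
        rw [map_add]
        refine le_trans ?_ (hw.min_le_map_add _ _)
        have e1 := wmul hw hwi (mf y₂ : ℤ) (xf y₁)
        have e2 := wmul hw hwi (mf y₁ : ℤ) (xf y₂)
        rw [e1, e2]
        push_cast
        exact le_refl _
      have f1 : f y₁ = (v ((mf y₂ : ℕ) : ℚ) + A) + c := by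
        rw [hf]
        simp only
        rw [hvsplit]
        have : (v ((mf y₂ : ℕ) : ℚ) + A) + (v ((mf y₁ : ℚ))⁻¹ + v ((mf y₂ : ℚ))⁻¹)
            = (A + v ((mf y₁ : ℚ))⁻¹) + (v ((mf y₂ : ℕ) : ℚ) + v ((mf y₂ : ℚ))⁻¹) := by abel
        rw [this, vcancel hv (hpos y₂), add_zero, hA]
      have f2 : f y₂ = (v ((mf y₁ : ℕ) : ℚ) + B) + c := by
        rw [hf]
        simp only
        rw [hvsplit]
        have : (v ((mf y₁ : ℕ) : ℚ) + B) + (v ((mf y₁ : ℚ))⁻¹ + v ((mf y₂ : ℚ))⁻¹)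
            = (B + v ((mf y₂ : ℚ))⁻¹) + (v ((mf y₁ : ℕ) : ℚ) + v ((mf y₁ : ℚ))⁻¹) := by abel
        rw [this, vcancel hv (hpos y₁), add_zero, hB]
      rw [f1, f2, min_add_add_right]
      exact add_le_add_left step1 c
    · -- map_zero
      show f (rep 0) = ⊤
      rw [show (0 : AddMonoidAlgebra ℚ H ⧸ J) = Ideal.Quotient.mk J 0 from (map_zero _).symm,
        w'mk, fspec 0 1 0 one_pos (by simp), map_zero, hw.map_zero, top_add]
    · -- map_one
      show f (rep 1) = 0
      rw [show (1 : AddMonoidAlgebra ℚ H ⧸ J) = Ideal.Quotient.mk J 1 from (map_one _).symm,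
        w'mk, fspec 1 1 1 one_pos (by simp), map_one, hw.map_one]
      norm_num [hv.map_one]
    · -- rationals
      intro q
      show f (rep (Ideal.Quotient.mk J (algebraMap ℚ (AddMonoidAlgebra ℚ H) q))) = v q
      rw [w'mk]
      by_cases hq : q = 0
      · subst hq
        rw [map_zero, fspec 0 1 0 one_pos (by simp), map_zero, hw.map_zero, top_add,
          hv.map_zero]
      · have hx : ((q.den : ℕ) : AddMonoidAlgebra ℚ H) * algebraMap ℚ (AddMonoidAlgebra ℚ H) q
            = intToRatGroupAlgebra H ((q.num : ℤ) : AddMonoidAlgebra ℤ H) := by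
          rw [map_intCast, show ((q.den : ℕ) : AddMonoidAlgebra ℚ H)
              = algebraMap ℚ (AddMonoidAlgebra ℚ H) ((q.den : ℕ) : ℚ) from
              (map_natCast (algebraMap ℚ (AddMonoidAlgebra ℚ H)) q.den).symm,
            show (((q.num : ℤ)) : AddMonoidAlgebra ℚ H)
              = algebraMap ℚ (AddMonoidAlgebra ℚ H) ((q.num : ℤ) : ℚ) from
              (map_intCast (algebraMap ℚ (AddMonoidAlgebra ℚ H)) q.num).symm,
            ← map_mul]
          congr 1
          rw [mul_comm, Rat.mul_den_eq_num]
        rw [fspec _ _ _ q.pos hx, hwi, ← hv.map_mul]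
        congr 1
        rw [← div_eq_mul_inv, Rat.num_div_den]
    · -- of'
      intro h
      show f (rep (Ideal.Quotient.mk J (of' ℚ H h))) = _
      rw [w'mk]
      have hx : ((1 : ℕ) : AddMonoidAlgebra ℚ H) * of' ℚ H h
          = intToRatGroupAlgebra H (of' ℤ H h) := by
        rw [iota_of']; simp
      rw [fspec _ 1 _ one_pos hx, hwh]
      norm_num [hv.map_one]
  · rintro ⟨w', hw', hwq, hwh⟩
    refine ⟨fun c => w' (Ideal.quotientMap J (intToRatGroupAlgebra H) Ideal.le_comap_map c),
      ⟨?_, ?_, ?_, ?_⟩, ?_, ?_⟩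
    · intro a b
      show w' (Ideal.quotientMap J (intToRatGroupAlgebra H) Ideal.le_comap_map (a * b)) = _
      rw [RingHom.map_mul, hw'.map_mul]
    · intro a b
      show min _ _ ≤ w' (Ideal.quotientMap J (intToRatGroupAlgebra H) Ideal.le_comap_map (a + b))
      rw [RingHom.map_add]
      exact hw'.min_le_map_add _ _
    · show w' (Ideal.quotientMap J (intToRatGroupAlgebra H) Ideal.le_comap_map 0) = ⊤
      rw [RingHom.map_zero, hw'.map_zero]
    · show w' (Ideal.quotientMap J (intToRatGroupAlgebra H) Ideal.le_comap_map 1) = 0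
      rw [RingHom.map_one, hw'.map_one]
    · intro n
      show w' (Ideal.quotientMap J (intToRatGroupAlgebra H) Ideal.le_comap_map
        (Ideal.Quotient.mk I ((n : ℤ) : AddMonoidAlgebra ℤ H))) = _
      rw [Ideal.quotientMap_mk, map_intCast,
        show (((n : ℤ)) : AddMonoidAlgebra ℚ H)
          = algebraMap ℚ (AddMonoidAlgebra ℚ H) ((n : ℤ) : ℚ) from
          (map_intCast (algebraMap ℚ (AddMonoidAlgebra ℚ H)) n).symm, hwq]
    · intro h
      show w' (Ideal.quotientMap J (intToRatGroupAlgebra H) Ideal.le_comap_map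
        (Ideal.Quotient.mk I (of' ℤ H h))) = _
      rw [Ideal.quotientMap_mk, iota_of', hwh]
end

section
/- Let H be a finitely generated abelian group, p a prime, I an ideal of the integral group ring ℤH, and I_p the image of I in the group algebra 𝔽_pH under the reduction map ℤH → 𝔽_pH. Let \hat v_p : ℤ → ℝ ∪ {∞} be the mod p valuation (\hat v_p(n) = ∞ if p ∣ n and 0 otherwise), and let κ : ℤH → ℤH/I and κ' : 𝔽_pH → 𝔽_pH/I_p be the quotient maps. Then for every group homomorphism χ : H → ℝ, there exists a ring valuation w on ℤH/I with w(κ(n·1)) = \hat v_p(n) for all n ∈ ℤ and w(κ(h)) = χ(h) for all h ∈ H, if and only if there exists a ring valuation w' on 𝔽_pH/I_p with w'(κ'(h)) = χ(h) for all h ∈ H. In particular, if I_p = 𝔽_pH then no ring valuation on ℤH/I restricts to \hat v_p on ℤ. -/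
open AddMonoidAlgebra

/-- The coefficient-reduction ring homomorphism `ℤH → 𝔽_pH` (the unique ring map sending each
group element `h` to itself and reducing coefficients mod `p`). -/
noncomputable def intToZModGroupAlgebra (p : ℕ) (H : Type*) [AddCommGroup H] :
    AddMonoidAlgebra ℤ H →+* AddMonoidAlgebra (ZMod p) H :=
  (AddMonoidAlgebra.lift ℤ (AddMonoidAlgebra (ZMod p) H) H
    (AddMonoidAlgebra.of (ZMod p) H)).toRingHom

/-! ### Auxiliary lemmas -/

lemma intToZModGA_single (p : ℕ) (H : Type*) [AddCommGroup H] (a : H) (b : ℤ) :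
    intToZModGroupAlgebra p H (AddMonoidAlgebra.single a b)
      = AddMonoidAlgebra.single a (b : ZMod p) := by
  have h1 : (AddMonoidAlgebra.single a b : AddMonoidAlgebra ℤ H)
      = (b : AddMonoidAlgebra ℤ H) * AddMonoidAlgebra.single a 1 := by
    rw [AddMonoidAlgebra.intCast_def, AddMonoidAlgebra.single_mul_single]
    simp
  rw [h1, map_mul, map_intCast]
  have h2 : intToZModGroupAlgebra p H (AddMonoidAlgebra.single a 1)
      = AddMonoidAlgebra.single a 1 := by
    have := AddMonoidAlgebra.lift_of' (R := ℤ) (A := AddMonoidAlgebra (ZMod p) H)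
      (AddMonoidAlgebra.of (ZMod p) H) a
    simpa [intToZModGroupAlgebra, of'_eq_of, AddMonoidAlgebra.of_apply] using this
  rw [h2, AddMonoidAlgebra.intCast_def, AddMonoidAlgebra.single_mul_single]
  simp

lemma intToZModGA_of' (p : ℕ) (H : Type*) [AddCommGroup H] (h : H) :
    intToZModGroupAlgebra p H (of' ℤ H h) = of' (ZMod p) H h := by
  have := intToZModGA_single p H h 1
  simpa [of'] using this

lemma intToZModGA_apply (p : ℕ) (H : Type*) [AddCommGroup H]
    (x : AddMonoidAlgebra ℤ H) (a : H) :
    (intToZModGroupAlgebra p H x).coeff a = ((x.coeff a : ℤ) : ZMod p) := by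
  induction x using AddMonoidAlgebra.induction with
  | zero => simp
  | single_add c b s hc hb ih =>
    classical
    rw [map_add, intToZModGA_single, AddMonoidAlgebra.coeff_add, AddMonoidAlgebra.coeff_add,
      Finsupp.add_apply, Finsupp.add_apply, ih, AddMonoidAlgebra.coeff_single,
      AddMonoidAlgebra.coeff_single, Finsupp.single_apply, Finsupp.single_apply]
    split_ifs <;> simp

lemma intToZModGA_surjective (p : ℕ) (H : Type*) [AddCommGroup H] :
    Function.Surjective (intToZModGroupAlgebra p H) := by
  intro z
  induction z using AddMonoidAlgebra.induction with
  | zero => exact ⟨0, map_zero _⟩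
  | single_add c b s hc hb ih =>
    obtain ⟨x, hx⟩ := ih
    obtain ⟨n, hn⟩ := ZMod.intCast_surjective (n := p) b
    exact ⟨AddMonoidAlgebra.single c n + x, by rw [map_add, intToZModGA_single, hn, hx]⟩

lemma intToZModGA_ker (p : ℕ) [NeZero p] (H : Type*) [AddCommGroup H]
    (x : AddMonoidAlgebra ℤ H) (hx : intToZModGroupAlgebra p H x = 0) :
    ∃ y : AddMonoidAlgebra ℤ H, x = ((p : ℤ) : AddMonoidAlgebra ℤ H) * y := by
  have hdvd : ∀ a : H, (p : ℤ) ∣ x.coeff a := by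
    intro a
    have : ((x.coeff a : ℤ) : ZMod p) = 0 := by
      rw [← intToZModGA_apply, hx]; rfl
    exact (ZMod.intCast_zmod_eq_zero_iff_dvd _ p).mp this
  refine ⟨AddMonoidAlgebra.ofCoeff (Finsupp.mapRange (fun b => b / (p : ℤ)) (by simp) x.coeff), ?_⟩
  rw [← zsmul_eq_mul]
  ext a
  rw [AddMonoidAlgebra.coeff_smul, Finsupp.smul_apply, AddMonoidAlgebra.coeff_ofCoeff,
    Finsupp.mapRange_apply, smul_eq_mul]
  exact (Int.mul_ediv_cancel' (hdvd a)).symm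

/-- `n • ⊤ = ⊤` in `WithTop ℝ` for `n ≠ 0`. -/
lemma nsmul_top_withTopReal (n : ℕ) (hn : n ≠ 0) : n • (⊤ : WithTop ℝ) = ⊤ := by
  obtain ⟨m, rfl⟩ := Nat.exists_eq_succ_of_ne_zero hn
  induction m with
  | zero => simp
  | succ k ih => rw [succ_nsmul]; simp

lemma nsmul_eq_zero_withTopReal (n : ℕ) (hn : n ≠ 0) (x : WithTop ℝ)
    (h : n • x = 0) : x = 0 := by
  cases x with
  | top => rw [nsmul_top_withTopReal n hn] at h; exact absurd h (by simp)
  | coe r =>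
    rw [← WithTop.coe_nsmul, ← WithTop.coe_zero, WithTop.coe_eq_coe] at h
    exact_mod_cast (smul_eq_zero.mp h).resolve_left hn

lemma isRingValuation_pow {A : Type*} [CommRing A] {v : A → WithTop ℝ}
    (hv : IsRingValuation v) (u : A) : ∀ k : ℕ, v (u ^ (k + 1)) = (k + 1) • v u := by
  intro k
  induction k with
  | zero => simp
  | succ m ih =>
    rw [pow_succ, hv.map_mul, ih]
    exact (succ_nsmul _ _).symm

set_option maxHeartbeats 1000000 in
set_option synthInstance.maxHeartbeats 400000 in
/-- third reduction step of Bieri–Groves. Let `H` be a finitely generated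
abelian group, `p` a prime, `I ⊆ ℤH` an ideal and `I_p` its image in `𝔽_pH`. For every
character `χ : H → ℝ`: there is a ring valuation on `ℤH/I` restricting to the mod `p`
valuation on `ℤ` and to `χ` on `H`, iff there is a ring valuation on `𝔽_pH/I_p` restricting
to `χ` on `H`.  In particular if `I_p = 𝔽_pH` then no ring valuation on `ℤH/I` restricts to
the mod `p` valuation on `ℤ`. -/
theorem exists_valuation_modp_iff_exists_valuation_ZMod
    (H : Type*) [AddCommGroup H] [AddGroup.FG H]
    (p : ℕ) (hp : p.Prime)
    (I : Ideal (AddMonoidAlgebra ℤ H)) :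
    (∀ χ : H →+ ℝ,
      (∃ w : (AddMonoidAlgebra ℤ H ⧸ I) → WithTop ℝ, IsRingValuation w ∧
          (∀ n : ℤ, w (Ideal.Quotient.mk I (n : AddMonoidAlgebra ℤ H))
            = if (p : ℤ) ∣ n then ⊤ else 0) ∧
          (∀ h : H, w (Ideal.Quotient.mk I (AddMonoidAlgebra.of' ℤ H h))
            = ((χ h : ℝ) : WithTop ℝ))) ↔
        (∃ w' : (AddMonoidAlgebra (ZMod p) H ⧸ Ideal.map (intToZModGroupAlgebra p H) I)
            → WithTop ℝ, IsRingValuation w' ∧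
          (∀ h : H, w' (Ideal.Quotient.mk (Ideal.map (intToZModGroupAlgebra p H) I)
            (AddMonoidAlgebra.of' (ZMod p) H h)) = ((χ h : ℝ) : WithTop ℝ)))) ∧
    (Ideal.map (intToZModGroupAlgebra p H) I = ⊤ →
      ∀ w : (AddMonoidAlgebra ℤ H ⧸ I) → WithTop ℝ, IsRingValuation w →
        ¬ (∀ n : ℤ, w (Ideal.Quotient.mk I (n : AddMonoidAlgebra ℤ H))
            = if (p : ℤ) ∣ n then ⊤ else 0)) := by
  haveI : Fact p.Prime := ⟨hp⟩
  haveI : NeZero p := ⟨hp.ne_zero⟩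
  have hple : 2 ≤ p := hp.two_le
  set f := intToZModGroupAlgebra p H with hf_def
  set Ip := Ideal.map f I with hIp_def
  have hf : Function.Surjective f := intToZModGA_surjective p H
  set g : AddMonoidAlgebra ℤ H →+* (AddMonoidAlgebra (ZMod p) H ⧸ Ip) :=
    (Ideal.Quotient.mk Ip).comp f with hg_def
  have hg : Function.Surjective g :=
    Ideal.Quotient.mk_surjective.comp hf
  -- key: elements of the kernel of `f` get value `⊤` under any valuation restricting to v̂_p
  have key_ker : ∀ (w : (AddMonoidAlgebra ℤ H ⧸ I) → WithTop ℝ), IsRingValuation w →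
      (∀ n : ℤ, w (Ideal.Quotient.mk I (n : AddMonoidAlgebra ℤ H))
        = if (p : ℤ) ∣ n then ⊤ else 0) →
      ∀ k : AddMonoidAlgebra ℤ H, f k = 0 → w (Ideal.Quotient.mk I k) = ⊤ := by
    intro w hw hwn k hk
    obtain ⟨y, rfl⟩ := intToZModGA_ker p H k hk
    rw [map_mul, hw.map_mul, hwn (p : ℤ), if_pos dvd_rfl, top_add]
  constructor
  · intro χ
    constructor
    · -- forward direction
      rintro ⟨w, hw, hwn, hwχ⟩
      -- independence of representative
      have indep : ∀ x₁ x₂ : AddMonoidAlgebra ℤ H, g x₁ = g x₂ →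
          w (Ideal.Quotient.mk I x₁) = w (Ideal.Quotient.mk I x₂) := by
        intro x₁ x₂ hx
        have hmem : x₁ - x₂ ∈ I ⊔ RingHom.ker f := by
          have h1 : f (x₁ - x₂) ∈ Ip := by
            have : g (x₁ - x₂) = 0 := by rw [map_sub, hx, sub_self]
            rwa [hg_def, RingHom.comp_apply, Ideal.Quotient.eq_zero_iff_mem] at this
          have h2 : x₁ - x₂ ∈ Ideal.comap f Ip := h1
          rwa [hIp_def, Ideal.comap_map_of_surjective f hf I] at h2
        obtain ⟨i, hi, k, hk, hik⟩ := Submodule.mem_sup.mp hmem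
        have hkf : f k = 0 := hk
        have hx1 : x₁ = x₂ + (i + k) := by rw [hik]; ring
        have hmk : (Ideal.Quotient.mk I x₁ : AddMonoidAlgebra ℤ H ⧸ I)
            = Ideal.Quotient.mk I x₂ + Ideal.Quotient.mk I k := by
          rw [hx1, map_add, map_add, Ideal.Quotient.eq_zero_iff_mem.mpr hi, zero_add]
        have hmk2 : (Ideal.Quotient.mk I x₂ : AddMonoidAlgebra ℤ H ⧸ I)
            = Ideal.Quotient.mk I x₁ + Ideal.Quotient.mk I (-k) := by
          rw [map_neg, hmk]; ring
        have hktop := key_ker w hw hwn k hkf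
        have hktop' : w (Ideal.Quotient.mk I (-k)) = ⊤ :=
          key_ker w hw hwn (-k) (by rw [map_neg, hkf, neg_zero])
        have d1 : w (Ideal.Quotient.mk I x₂) ≤ w (Ideal.Quotient.mk I x₁) := by
          have := hw.min_le_map_add (Ideal.Quotient.mk I x₂) (Ideal.Quotient.mk I k)
          rw [← hmk, hktop, min_eq_left le_top] at this
          exact this
        have d2 : w (Ideal.Quotient.mk I x₁) ≤ w (Ideal.Quotient.mk I x₂) := by
          have := hw.min_le_map_add (Ideal.Quotient.mk I x₁) (Ideal.Quotient.mk I (-k))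
          rw [← hmk2, hktop', min_eq_left le_top] at this
          exact this
        exact le_antisymm d2 d1
      -- the value of w' on g x is w (mk x)
      set s := Function.surjInv hg with hs_def
      have hgs : ∀ y, g (s y) = y := fun y => Function.surjInv_eq hg y
      set w' : (AddMonoidAlgebra (ZMod p) H ⧸ Ip) → WithTop ℝ :=
        fun y => w (Ideal.Quotient.mk I (s y)) with hw'_def
      have hw'g : ∀ x : AddMonoidAlgebra ℤ H, w' (g x) = w (Ideal.Quotient.mk I x) := by
        intro x
        exact indep (s (g x)) x (hgs (g x))
      refine ⟨w', ⟨?_, ?_, ?_, ?_⟩, ?_⟩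
      · intro a b
        obtain ⟨x, rfl⟩ := hg a
        obtain ⟨y, rfl⟩ := hg b
        rw [← map_mul, hw'g, hw'g, hw'g, map_mul, hw.map_mul]
      · intro a b
        obtain ⟨x, rfl⟩ := hg a
        obtain ⟨y, rfl⟩ := hg b
        rw [← map_add, hw'g, hw'g, hw'g, map_add]
        exact hw.min_le_map_add _ _
      · have : w' (g 0) = w (Ideal.Quotient.mk I 0) := hw'g 0
        rwa [map_zero, map_zero, hw.map_zero] at this
      · have : w' (g 1) = w (Ideal.Quotient.mk I 1) := hw'g 1
        rwa [map_one, map_one, hw.map_one] at this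
      · intro h
        have hof : g (of' ℤ H h) = Ideal.Quotient.mk Ip (of' (ZMod p) H h) := by
          rw [hg_def, RingHom.comp_apply, hf_def, intToZModGA_of']
        rw [← hof, hw'g]
        exact hwχ h
    · -- reverse direction
      rintro ⟨w', hw', hw'χ⟩
      have hI0 : ∀ a ∈ I, g a = 0 := by
        intro a ha
        rw [hg_def, RingHom.comp_apply, Ideal.Quotient.eq_zero_iff_mem]
        exact Ideal.mem_map_of_mem f ha
      set ψ : (AddMonoidAlgebra ℤ H ⧸ I) →+* (AddMonoidAlgebra (ZMod p) H ⧸ Ip) :=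
        Ideal.Quotient.lift I g hI0 with hψ_def
      have hψmk : ∀ x : AddMonoidAlgebra ℤ H,
          ψ (Ideal.Quotient.mk I x) = g x := fun x => Ideal.Quotient.lift_mk I g hI0
      refine ⟨fun a => w' (ψ a), ⟨?_, ?_, ?_, ?_⟩, ?_, ?_⟩
      · intro a b; rw [map_mul]; exact hw'.map_mul _ _
      · intro a b; rw [map_add]; exact hw'.min_le_map_add _ _
      · rw [map_zero]; exact hw'.map_zero
      · rw [map_one]; exact hw'.map_one
      · intro n
        show w' (ψ (Ideal.Quotient.mk I ((n : ℤ) : AddMonoidAlgebra ℤ H)))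
          = if (p : ℤ) ∣ n then ⊤ else 0
        rw [hψmk, map_intCast]
        by_cases hdvd : (p : ℤ) ∣ n
        · rw [if_pos hdvd]
          have : ((n : ℤ) : AddMonoidAlgebra (ZMod p) H ⧸ Ip) = 0 := by
            have h1 : ((n : ℤ) : AddMonoidAlgebra (ZMod p) H) = 0 := by
              rw [AddMonoidAlgebra.intCast_def,
                (ZMod.intCast_zmod_eq_zero_iff_dvd n p).mpr hdvd]
              simp
            rw [← map_intCast (Ideal.Quotient.mk Ip) n, h1, map_zero]
          rw [this]; exact hw'.map_zero
        · rw [if_neg hdvd]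
          set u : AddMonoidAlgebra (ZMod p) H ⧸ Ip := (n : AddMonoidAlgebra (ZMod p) H ⧸ Ip) with hu_def
          have hpow : u ^ (p - 1) = 1 := by
            have h1 : ((n : ZMod p)) ≠ 0 := fun h =>
              hdvd ((ZMod.intCast_zmod_eq_zero_iff_dvd n p).mp h)
            have h2 : ((n ^ (p - 1) : ℤ) : AddMonoidAlgebra (ZMod p) H) = 1 := by
              rw [AddMonoidAlgebra.intCast_def]
              push_cast
              rw [ZMod.pow_card_sub_one_eq_one h1]
              exact (AddMonoidAlgebra.one_def).symm
            have : u ^ (p - 1) = ((n ^ (p - 1) : ℤ) : AddMonoidAlgebra (ZMod p) H ⧸ Ip) := by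
              rw [hu_def]; push_cast; ring
            rw [this, ← map_intCast (Ideal.Quotient.mk Ip) (n ^ (p - 1)), h2, map_one]
          have hp2 : p - 2 + 1 = p - 1 := by omega
          have := isRingValuation_pow hw' u (p - 2)
          rw [hp2, hpow, hw'.map_one] at this
          exact (nsmul_eq_zero_withTopReal (p - 1) (by omega) _ this.symm)
      · intro h
        have hof : g (of' ℤ H h) = Ideal.Quotient.mk Ip (of' (ZMod p) H h) := by
          rw [hg_def, RingHom.comp_apply, hf_def, intToZModGA_of']
        show w' (ψ (Ideal.Quotient.mk I (of' ℤ H h))) = ((χ h : ℝ) : WithTop ℝ)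
        rw [hψmk, hof]
        exact hw'χ h
  · -- the "in particular" statement
    intro htop w hw hwn
    have h1 : (1 : AddMonoidAlgebra ℤ H) ∈ I ⊔ RingHom.ker f := by
      have : (1 : AddMonoidAlgebra (ZMod p) H) ∈ Ip := htop ▸ Submodule.mem_top
      have h2 : (1 : AddMonoidAlgebra ℤ H) ∈ Ideal.comap f Ip := by
        show f 1 ∈ Ip
        rw [map_one]
        exact this
      rwa [hIp_def, Ideal.comap_map_of_surjective f hf I] at h2
    obtain ⟨i, hi, k, hk, hik⟩ := Submodule.mem_sup.mp h1
    have hkf : f k = 0 := hk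
    have hmk : (Ideal.Quotient.mk I (1 : AddMonoidAlgebra ℤ H)) = Ideal.Quotient.mk I k := by
      rw [← hik, map_add, Ideal.Quotient.eq_zero_iff_mem.mpr hi, zero_add]
    have htop' : w (Ideal.Quotient.mk I (1 : AddMonoidAlgebra ℤ H)) = ⊤ := by
      rw [hmk]; exact key_ker w hw hwn k hkf
    have hone : w (Ideal.Quotient.mk I ((1 : ℤ) : AddMonoidAlgebra ℤ H)) = 0 := by
      have hnd : ¬ (p : ℤ) ∣ 1 := by
        intro hd
        have h1 := Int.eq_one_of_dvd_one (by positivity) hd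
        exact hp.one_lt.ne' (by exact_mod_cast h1)
      rw [hwn 1, if_neg hnd]
    rw [Int.cast_one, htop'] at hone
    exact absurd hone (by simp)
end

section
/- Let Γ_ℓ = (V, E, ℓ) be an edge-weighted finite simple graph and Γ the underlying simple graph obtained by forgetting the weights. For any function t : V → ℂˣ, let ρ_ℓ : G_{Γ_ℓ} → ℂˣ and ρ : G_Γ → ℂˣ be the group homomorphisms determined by sending each vertex generator a ∈ V to t(a) (these are well defined since ℂˣ is abelian). Then H_1(G_{Γ_ℓ}; ℂ_{ρ_ℓ}) ≠ 0 if and only if H_1(G_Γ; ℂ_ρ) ≠ 0. -/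
set_option linter.unusedSectionVars false
set_option maxHeartbeats 1000000


/-- The defining relations of the weighted right-angled Artin group attached to an
edge-weighted simple graph: `[a,b]^{ℓ(a,b)} = 1` for each edge `{a,b}`. -/
def wraagRels {V : Type*} (G : SimpleGraph V) (ℓ : V → V → ℕ) : Set (FreeGroup V) :=
  {r | ∃ a b : V, G.Adj a b ∧
    r = (FreeGroup.of a * FreeGroup.of b * (FreeGroup.of a)⁻¹ * (FreeGroup.of b)⁻¹) ^ ℓ a b}

/-- The weighted right-angled Artin group of an edge-weighted simple graph. -/
def WRAAG {V : Type*} (G : SimpleGraph V) (ℓ : V → V → ℕ) : Type _ :=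
  PresentedGroup (wraagRels G ℓ)

instance {V : Type*} (G : SimpleGraph V) (ℓ : V → V → ℕ) : Group (WRAAG G ℓ) := by
  unfold WRAAG; infer_instance

/-- The generator of `WRAAG G ℓ` corresponding to a vertex. -/
def WRAAG.of {V : Type*} {G : SimpleGraph V} {ℓ : V → V → ℕ} (a : V) : WRAAG G ℓ :=
  PresentedGroup.of a

/-!  Group homology in degree one with coefficients in a one-dimensional representation,
via the (inhomogeneous) bar complex.  For a group `G`, a field `k` and a homomorphism
`ρ : G → kˣ`, the relevant piece of the bar complex is
`(G × G →₀ k) --d₂--> (G →₀ k) --d₁--> k` with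
`d₁(single g a) = ρ(g)⁻¹·a - a` and
`d₂(single (g,h) a) = single h (ρ(g)⁻¹·a) - single (g·h) a + single g a`,
and `H₁(G; k_ρ) = ker d₁ / im d₂`. -/

/-- The differential `C₁ → C₀` of the bar complex of `G` with coefficients in `k_ρ`. -/
noncomputable def barD1 (k : Type*) [Field k] {G : Type*} [Group G] (ρ : G →* kˣ) :
    (G →₀ k) →ₗ[k] k :=
  Finsupp.lsum k (fun g => ((((ρ g)⁻¹ : kˣ) : k) - 1) • (LinearMap.id : k →ₗ[k] k))

/-- The differential `C₂ → C₁` of the bar complex of `G` with coefficients in `k_ρ`. -/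
noncomputable def barD2 (k : Type*) [Field k] {G : Type*} [Group G] (ρ : G →* kˣ) :
    (G × G →₀ k) →ₗ[k] (G →₀ k) :=
  Finsupp.lsum k (fun p => (((ρ p.1)⁻¹ : kˣ) : k) • Finsupp.lsingle p.2
    - Finsupp.lsingle (p.1 * p.2) + Finsupp.lsingle p.1)

/-- `H₁(G; k_ρ)`: the first group homology of `G` with coefficients in the one-dimensional
representation `k_ρ`, i.e. `ker d₁ / im d₂` for the bar complex above. -/
noncomputable def H1Rep (k : Type*) [Field k] {G : Type*} [Group G] (ρ : G →* kˣ) : Type _ :=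
  @HasQuotient.Quotient (↥(LinearMap.ker (barD1 k ρ)))
    (Submodule k ↥(LinearMap.ker (barD1 k ρ))) (Submodule.hasQuotient (R := k) (M := ↥(LinearMap.ker (barD1 k ρ))))
    ((LinearMap.range (barD2 k ρ)).comap (LinearMap.ker (barD1 k ρ)).subtype)

section TwProdDef
variable (k : Type*) [Field k] (M : Type*) [AddCommGroup M] [Module k M]
@[ext]
structure TwProd where
  q : M
  u : kˣ
namespace TwProd
variable {k M}
instance : Mul (TwProd k M) := ⟨fun p r => ⟨p.q + (p.u : k) • r.q, p.u * r.u⟩⟩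
instance : One (TwProd k M) := ⟨⟨0, 1⟩⟩
instance : Inv (TwProd k M) := ⟨fun p => ⟨-((((p.u⁻¹ : kˣ) : k)) • p.q), p.u⁻¹⟩⟩
@[simp] lemma mul_q (p r : TwProd k M) : (p * r).q = p.q + (p.u : k) • r.q := rfl
@[simp] lemma mul_u (p r : TwProd k M) : (p * r).u = p.u * r.u := rfl
@[simp] lemma one_q : (1 : TwProd k M).q = 0 := rfl
@[simp] lemma one_u : (1 : TwProd k M).u = 1 := rfl
@[simp] lemma inv_q (p : TwProd k M) : (p⁻¹).q = -((((p.u⁻¹ : kˣ) : k)) • p.q) := rfl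
@[simp] lemma inv_u (p : TwProd k M) : (p⁻¹).u = p.u⁻¹ := rfl
instance : Group (TwProd k M) where
  mul_assoc p r s := by ext <;> simp [smul_add, mul_smul, add_assoc, mul_assoc]
  one_mul p := by ext <;> simp
  mul_one p := by ext <;> simp
  inv_mul_cancel p := by ext <;> simp [smul_smul]
def sndHom : TwProd k M →* kˣ where
  toFun p := p.u
  map_one' := rfl
  map_mul' _ _ := rfl
@[simp] lemma sndHom_apply (p : TwProd k M) : sndHom p = p.u := rfl
def mapHom {M' : Type*} [AddCommGroup M'] [Module k M'] (φ : M →ₗ[k] M') :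
    TwProd k M →* TwProd k M' where
  toFun p := ⟨φ p.q, p.u⟩
  map_one' := by ext <;> simp
  map_mul' p r := by ext <;> simp
@[simp] lemma mapHom_q {M' : Type*} [AddCommGroup M'] [Module k M'] (φ : M →ₗ[k] M')
    (p : TwProd k M) : (mapHom φ p).q = φ p.q := rfl
@[simp] lemma mapHom_u {M' : Type*} [AddCommGroup M'] [Module k M'] (φ : M →ₗ[k] M')
    (p : TwProd k M) : (mapHom φ p).u = p.u := rfl
lemma pow_u (p : TwProd k M) (n : ℕ) : (p ^ n).u = p.u ^ n := by
  simpa using map_pow (sndHom (k := k) (M := M)) p n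
lemma pow_q_of_u_eq_one (p : TwProd k M) (h : p.u = 1) (n : ℕ) : (p ^ n).q = n • p.q := by
  induction n with
  | zero => simp
  | succ n ih => rw [pow_succ, mul_q, ih, pow_u, h, succ_nsmul]; simp
end TwProd
end TwProdDef

section Fox

variable {k : Type*} [Field k] {V : Type*}

/-- The Fox-derivative homomorphism on the free group. -/
noncomputable def foxLift (t : V → kˣ) : FreeGroup V →* TwProd k (V →₀ k) :=
  FreeGroup.lift (fun a => ⟨Finsupp.single a 1, (t a)⁻¹⟩)

/-- The (ρ⁻¹-weighted) Fox derivative of a word. -/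
noncomputable def fox (t : V → kˣ) (w : FreeGroup V) : V →₀ k := (foxLift t w).q

@[simp] lemma foxLift_of (t : V → kˣ) (a : V) :
    foxLift (k := k) t (FreeGroup.of a) = ⟨Finsupp.single a 1, (t a)⁻¹⟩ :=
  FreeGroup.lift_apply_of

lemma foxLift_u (t : V → kˣ) (w : FreeGroup V) :
    (foxLift (k := k) t w).u = FreeGroup.lift (fun a => (t a)⁻¹) w := by
  rw [← FreeGroup.lift_unique (TwProd.sndHom.comp (foxLift t)) (fun a => by simp)]
  rfl

@[simp] lemma fox_of (t : V → kˣ) (a : V) :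
    fox (k := k) t (FreeGroup.of a) = Finsupp.single a 1 := by
  simp [fox]

@[simp] lemma fox_one (t : V → kˣ) : fox (k := k) t 1 = 0 := by
  simp [fox, map_one (foxLift t)]

lemma fox_mul (t : V → kˣ) (x y : FreeGroup V) :
    fox (k := k) t (x * y) = fox t x + ((foxLift (k := k) t x).u : k) • fox t y := by
  simp [fox, map_mul]

lemma fox_pow (t : V → kˣ) (w : FreeGroup V) (h : (foxLift (k := k) t w).u = 1) (n : ℕ) :
    fox (k := k) t (w ^ n) = (n : k) • fox t w := by
  rw [fox, map_pow, TwProd.pow_q_of_u_eq_one _ h, ← fox]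
  simp [Nat.cast_smul_eq_nsmul]

/-- The linear functional on `V →₀ k` with `single a 1 ↦ (t a)⁻¹ - 1`. -/
noncomputable def lam (t : V → kˣ) : (V →₀ k) →ₗ[k] k :=
  Finsupp.lsum k (fun a => ((((t a)⁻¹ : kˣ) : k) - 1) • (LinearMap.id : k →ₗ[k] k))

lemma lam_single (t : V → kˣ) (a : V) (b : k) :
    lam t (Finsupp.single a b) = ((((t a)⁻¹ : kˣ) : k) - 1) * b := by
  simp [lam, Finsupp.lsum_single, smul_eq_mul]

end Fox

section BarCalc

variable {k : Type*} [Field k] {G : Type*} [Group G] (ρ : G →* kˣ)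

lemma barD1_single (g : G) (b : k) :
    barD1 k ρ (Finsupp.single g b) = ((((ρ g)⁻¹ : kˣ) : k) - 1) * b := by
  simp [barD1, Finsupp.lsum_single, smul_eq_mul]

lemma barD2_single (g h : G) (b : k) :
    barD2 k ρ (Finsupp.single (g, h) b) =
      (((ρ g)⁻¹ : kˣ) : k) • Finsupp.single h b - Finsupp.single (g * h) b
        + Finsupp.single g b := by
  simp [barD2, Finsupp.lsum_single]

end BarCalc

section Main

variable {k : Type*} [Field k] {V : Type*}

theorem ker_le_range_iff (rels : Set (FreeGroup V)) (t : V → kˣ)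
    (ρ : PresentedGroup rels →* kˣ) (hρ : ∀ a, ρ (PresentedGroup.of a) = t a) :
    LinearMap.ker (barD1 k ρ) ≤ LinearMap.range (barD2 k ρ) ↔
      LinearMap.ker (lam t) ≤ Submodule.span k (fox t '' rels) := by
  classical
  have hmk1 : ∀ r ∈ rels, PresentedGroup.mk rels r = 1 := fun r hr =>
    (QuotientGroup.eq_one_iff r).mpr (Subgroup.subset_normalClosure hr)
  have hliftρ : ∀ w, FreeGroup.lift t w = ρ (PresentedGroup.mk rels w) := by
    intro w
    exact (FreeGroup.lift_unique (ρ.comp (PresentedGroup.mk rels)) (fun a => hρ a)).symm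
  have hliftinv : ∀ w : FreeGroup V,
      FreeGroup.lift (fun a => (t a)⁻¹) w = (FreeGroup.lift t w)⁻¹ := by
    intro w
    exact (FreeGroup.lift_unique (invMonoidHom.comp (FreeGroup.lift t))
      (fun a => by simp)).symm
  have hfoxu : ∀ w, ((foxLift (k := k) t w).u) = (ρ (PresentedGroup.mk rels w))⁻¹ := by
    intro w; rw [foxLift_u, hliftinv, hliftρ]
  have hrel_u : ∀ r ∈ rels, (foxLift (k := k) t r).u = 1 := by
    intro r hr; rw [hfoxu, hmk1 r hr, map_one, inv_one]
  set S := Submodule.span k (fox (k := k) t '' rels) with hS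
  have hker : ∀ r ∈ rels,
      FreeGroup.lift (fun a =>
        (⟨S.mkQ (Finsupp.single a 1), (t a)⁻¹⟩ : TwProd k ((V →₀ k) ⧸ S))) r = 1 := by
    intro r hr
    have hcomp : FreeGroup.lift (fun a =>
        (⟨S.mkQ (Finsupp.single a 1), (t a)⁻¹⟩ : TwProd k ((V →₀ k) ⧸ S))) r
        = TwProd.mapHom S.mkQ (foxLift t r) :=
      (FreeGroup.lift_unique ((TwProd.mapHom S.mkQ).comp (foxLift t))
        (fun a => by rw [MonoidHom.comp_apply, foxLift_of]; rfl)).symm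
    rw [hcomp]
    have h1 : S.mkQ (fox t r) = 0 := by
      rw [Submodule.mkQ_apply, Submodule.Quotient.mk_eq_zero]
      exact Submodule.subset_span ⟨r, hr, rfl⟩
    ext
    · rw [TwProd.mapHom_q, TwProd.one_q]
      exact h1
    · rw [TwProd.mapHom_u, TwProd.one_u, hrel_u r hr]
  set fbar : PresentedGroup rels →* TwProd k ((V →₀ k) ⧸ S) :=
    PresentedGroup.toGroup hker with hfbar
  have fbar_of : ∀ a : V,
      fbar (PresentedGroup.of a) = ⟨S.mkQ (Finsupp.single a 1), (t a)⁻¹⟩ :=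
    fun a => PresentedGroup.toGroup.of hker
  have fbar_u : ∀ g, (fbar g).u = (ρ g)⁻¹ := by
    intro g
    have h : TwProd.sndHom.comp fbar = invMonoidHom.comp ρ := by
      ext a
      simp [fbar_of, hρ]
    simpa using DFunLike.congr_fun h g
  set Φ : ((PresentedGroup rels) →₀ k) →ₗ[k] ((V →₀ k) ⧸ S) :=
    Finsupp.lsum k (fun g => LinearMap.toSpanSingleton k _ (fbar g).q) with hΦ
  have Φ_single : ∀ (g : PresentedGroup rels) (b : k),
      Φ (Finsupp.single g b) = b • (fbar g).q := by
    intro g b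
    simp [hΦ, Finsupp.lsum_single, LinearMap.toSpanSingleton_apply]
  have fbar_mul_q : ∀ g h : PresentedGroup rels,
      (fbar (g * h)).q = (fbar g).q + (((ρ g)⁻¹ : kˣ) : k) • (fbar h).q := by
    intro g h
    rw [map_mul]
    simp [fbar_u]
  have hΦd2 : ∀ x, Φ (barD2 k ρ x) = 0 := by
    have h : Φ.comp (barD2 k ρ) = 0 := by
      apply Finsupp.lhom_ext
      rintro ⟨g, h⟩ b
      simp only [LinearMap.comp_apply, LinearMap.zero_apply, barD2_single, map_add, map_sub,
        map_smul, Φ_single, fbar_mul_q]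
      module
    intro x
    calc Φ (barD2 k ρ x) = (Φ.comp (barD2 k ρ)) x := rfl
    _ = 0 := by rw [h]; rfl
  set j : (V →₀ k) →ₗ[k] ((PresentedGroup rels) →₀ k) :=
    Finsupp.lmapDomain k k (fun a => (PresentedGroup.of a : PresentedGroup rels)) with hj
  have j_single : ∀ (a : V) (b : k),
      j (Finsupp.single a b) = Finsupp.single (PresentedGroup.of a : PresentedGroup rels) b := by
    intro a b
    simp [hj, Finsupp.mapDomain_single]
  have hd1j : ∀ y, barD1 k ρ (j y) = lam t y := by
    have h : (barD1 k ρ).comp j = lam t := by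
      apply Finsupp.lhom_ext
      intro a b
      simp only [LinearMap.comp_apply, j_single, barD1_single, hρ, lam_single]
    intro y
    calc barD1 k ρ (j y) = ((barD1 k ρ).comp j) y := rfl
    _ = lam t y := by rw [h]
  have hsingle_one : Finsupp.single (1 : PresentedGroup rels) (1 : k)
      ∈ LinearMap.range (barD2 k ρ) := by
    refine ⟨Finsupp.single (1, 1) 1, ?_⟩
    rw [barD2_single]
    simp
  have hgen : ∀ g h : PresentedGroup rels,
      (((ρ g)⁻¹ : kˣ) : k) • Finsupp.single h (1 : k) - Finsupp.single (g * h) 1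
        + Finsupp.single g 1 ∈ LinearMap.range (barD2 k ρ) :=
    fun g h => ⟨Finsupp.single (g, h) 1, barD2_single ρ g h 1⟩
  have hR2ker : LinearMap.range (barD2 k ρ) ≤ LinearMap.ker (barD1 k ρ) := by
    rintro _ ⟨x, rfl⟩
    rw [LinearMap.mem_ker]
    have h : (barD1 k ρ).comp (barD2 k ρ) = 0 := by
      apply Finsupp.lhom_ext
      rintro ⟨g, h⟩ b
      simp only [LinearMap.comp_apply, barD2_single, map_add, map_sub, map_smul, barD1_single,
        LinearMap.zero_apply, map_mul, mul_inv, Units.val_mul, smul_eq_mul]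
      ring
    calc barD1 k ρ (barD2 k ρ x) = ((barD1 k ρ).comp (barD2 k ρ)) x := rfl
    _ = 0 := by rw [h]; rfl
  have hpure : ∀ b : V, (pure b : FreeGroup V) = FreeGroup.of b := fun _ => rfl
  have hmkof : ∀ b : V, PresentedGroup.mk rels (FreeGroup.of b)
      = (PresentedGroup.of b : PresentedGroup rels) := fun _ => rfl
  have claim1 : ∀ w : FreeGroup V,
      Finsupp.single (PresentedGroup.mk rels w) (1 : k) - j (fox t w)
        ∈ LinearMap.range (barD2 k ρ) := by
    intro w
    induction w using FreeGroup.induction_on with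
    | C1 => simpa using hsingle_one
    | of a =>
      simp only [hpure, hmkof, fox_of, j_single]
      simpa using (LinearMap.range (barD2 k ρ)).zero_mem
    | inv_of a _ =>
      have hρa : (((ρ (((PresentedGroup.of a : PresentedGroup rels))⁻¹))⁻¹ : kˣ) : k)
          = ((t a : kˣ) : k) := by
        rw [map_inv, inv_inv, hρ]
      have h := add_mem (hgen ((PresentedGroup.of a : PresentedGroup rels))⁻¹
        (PresentedGroup.of a)) hsingle_one
      rw [hρa, inv_mul_cancel] at h
      have hfox : fox (k := k) t (FreeGroup.of a)⁻¹
          = -(((t a : kˣ) : k) • Finsupp.single a 1) := by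
        simp [fox, map_inv]
      rw [map_inv, hmkof, hfox, map_neg, map_smul, j_single]
      convert h using 1
      abel
    | mul x y ihx ihy =>
      have hfm : fox (k := k) t (x * y)
          = fox t x + (((ρ (PresentedGroup.mk rels x))⁻¹ : kˣ) : k) • fox t y := by
        rw [fox_mul, hfoxu]
      have h := sub_mem (add_mem ihx (Submodule.smul_mem _
          (((ρ (PresentedGroup.mk rels x))⁻¹ : kˣ) : k) ihy))
        (hgen (PresentedGroup.mk rels x) (PresentedGroup.mk rels y))
      show Finsupp.single ((PresentedGroup.mk rels) (x * y)) (1 : k) - j (fox t (x * y)) ∈ _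
      rw [map_mul, hfm, map_add, map_smul]
      convert h using 1
      module
  have claim1' : ∀ x : ((PresentedGroup rels) →₀ k),
      ∃ y : V →₀ k, x - j y ∈ LinearMap.range (barD2 k ρ) := by
    intro x
    induction x using Finsupp.induction_linear with
    | zero => exact ⟨0, by simpa using (LinearMap.range (barD2 k ρ)).zero_mem⟩
    | add f g ihf ihg =>
      obtain ⟨y1, h1⟩ := ihf
      obtain ⟨y2, h2⟩ := ihg
      refine ⟨y1 + y2, ?_⟩
      rw [map_add]
      convert add_mem h1 h2 using 1
      abel
    | single g b =>
      obtain ⟨w, hw⟩ := PresentedGroup.mk_surjective rels g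
      refine ⟨b • fox t w, ?_⟩
      rw [map_smul]
      have h := Submodule.smul_mem _ b (claim1 w)
      rw [hw] at h
      convert h using 1
      rw [smul_sub, Finsupp.smul_single, smul_eq_mul, mul_one]
  have hjS : ∀ y ∈ S, j y ∈ LinearMap.range (barD2 k ρ) := by
    have h : S ≤ Submodule.comap j (LinearMap.range (barD2 k ρ)) := by
      rw [hS, Submodule.span_le]
      rintro _ ⟨r, hr, rfl⟩
      simp only [SetLike.mem_coe, Submodule.mem_comap]
      have h2 := sub_mem hsingle_one (claim1 r)
      rw [hmk1 r hr] at h2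
      convert h2 using 1
      abel
    exact fun y hy => h hy
  have hΦj : ∀ y, Φ (j y) = S.mkQ y := by
    have h : Φ.comp j = S.mkQ := by
      apply Finsupp.lhom_ext
      intro a b
      rw [LinearMap.comp_apply, j_single, Φ_single, fbar_of]
      show b • S.mkQ (Finsupp.single a 1) = S.mkQ (Finsupp.single a b)
      rw [← map_smul, Finsupp.smul_single, smul_eq_mul, mul_one]
    intro y
    calc Φ (j y) = (Φ.comp j) y := rfl
    _ = S.mkQ y := by rw [h]
  constructor
  · intro hk y hy
    rw [LinearMap.mem_ker] at hy
    have h1 : j y ∈ LinearMap.ker (barD1 k ρ) := by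
      rw [LinearMap.mem_ker, hd1j, hy]
    obtain ⟨z, hz⟩ := hk h1
    have h2 : Φ (j y) = 0 := by rw [← hz]; exact hΦd2 z
    rw [hΦj, Submodule.mkQ_apply, Submodule.Quotient.mk_eq_zero] at h2
    exact h2
  · intro hk x hx
    obtain ⟨y, hy⟩ := claim1' x
    rw [LinearMap.mem_ker] at hx
    have hd := hR2ker hy
    rw [LinearMap.mem_ker, map_sub, hx, zero_sub, neg_eq_zero, hd1j] at hd
    have h2 : y ∈ S := hk (LinearMap.mem_ker.mpr hd)
    have h3 := hjS y h2
    have h4 : x = (x - j y) + j y := by abel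
    rw [h4]
    exact add_mem hy h3

end Main


theorem nontrivial_H1Rep_iff {k : Type*} [Field k] {G : Type*} [Group G] (ρ : G →* kˣ) :
    Nontrivial (H1Rep k ρ) ↔
      ¬ (LinearMap.ker (barD1 k ρ) ≤ LinearMap.range (barD2 k ρ)) := by
  rw [← not_subsingleton_iff_nontrivial]
  apply not_congr
  exact Iff.trans Submodule.Quotient.subsingleton_iff Submodule.comap_subtype_eq_top

/-- Let `Γ_ℓ` be an edge-weighted finite simple graph and `Γ` the
underlying unweighted graph.  For `t : V → ℂˣ`, let `ρ_ℓ : G_{Γ_ℓ} → ℂˣ` and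
`ρ : G_Γ → ℂˣ` be the homomorphisms sending each vertex generator `a` to `t a`.  Then
`H₁(G_{Γ_ℓ}; ℂ_{ρ_ℓ}) ≠ 0` iff `H₁(G_Γ; ℂ_ρ) ≠ 0`. -/
theorem h1_wraag_ne_zero_iff_h1_raag_ne_zero
    {V : Type*} [Fintype V] (G : SimpleGraph V) (ℓ : V → V → ℕ)
    (hsym : ∀ a b, ℓ a b = ℓ b a) (hpos : ∀ a b, G.Adj a b → 0 < ℓ a b)
    (t : V → ℂˣ)
    (ρℓ : WRAAG G ℓ →* ℂˣ) (hρℓ : ∀ a : V, ρℓ (WRAAG.of a) = t a)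
    (ρ : WRAAG G (fun _ _ => 1) →* ℂˣ) (hρ : ∀ a : V, ρ (WRAAG.of a) = t a) :
    Nontrivial (H1Rep ℂ ρℓ) ↔ Nontrivial (H1Rep ℂ ρ) := by
  have hcu : ∀ a b : V, (foxLift (k := ℂ) t (FreeGroup.of a * FreeGroup.of b
      * (FreeGroup.of a)⁻¹ * (FreeGroup.of b)⁻¹)).u = 1 := by
    intro a b
    simp only [map_mul, map_inv, TwProd.mul_u, TwProd.inv_u, foxLift_of]
    rw [mul_comm ((t a)⁻¹) ((t b)⁻¹)]
    group
  have hfoxpow : ∀ (a b : V) (n : ℕ),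
      fox (k := ℂ) t ((FreeGroup.of a * FreeGroup.of b
          * (FreeGroup.of a)⁻¹ * (FreeGroup.of b)⁻¹) ^ n)
        = (n : ℂ) • fox t (FreeGroup.of a * FreeGroup.of b
          * (FreeGroup.of a)⁻¹ * (FreeGroup.of b)⁻¹) :=
    fun a b n => fox_pow t _ (hcu a b) n
  have hspan : Submodule.span ℂ (fox t '' wraagRels G ℓ)
      = Submodule.span ℂ (fox t '' wraagRels G (fun _ _ => 1)) := by
    apply le_antisymm <;> rw [Submodule.span_le]
    · rintro _ ⟨r, ⟨a, b, hab, rfl⟩, rfl⟩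
      rw [hfoxpow a b]
      refine Submodule.smul_mem _ _ (Submodule.subset_span ⟨_, ⟨a, b, hab, rfl⟩, ?_⟩)
      show fox t (_ ^ (1 : ℕ)) = _
      rw [pow_one]
    · rintro _ ⟨r, ⟨a, b, hab, rfl⟩, rfl⟩
      have hne : ((ℓ a b : ℂ)) ≠ 0 := Nat.cast_ne_zero.mpr (hpos a b hab).ne'
      have he : fox (k := ℂ) t ((FreeGroup.of a * FreeGroup.of b
            * (FreeGroup.of a)⁻¹ * (FreeGroup.of b)⁻¹) ^ (1 : ℕ))
          = (ℓ a b : ℂ)⁻¹ • fox t ((FreeGroup.of a * FreeGroup.of b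
            * (FreeGroup.of a)⁻¹ * (FreeGroup.of b)⁻¹) ^ (ℓ a b)) := by
        rw [hfoxpow, hfoxpow, Nat.cast_one, one_smul, smul_smul, inv_mul_cancel₀ hne, one_smul]
      show fox t (_ ^ (1 : ℕ)) ∈ _
      rw [he]
      exact Submodule.smul_mem _ _ (Submodule.subset_span ⟨_, ⟨a, b, hab, rfl⟩, rfl⟩)
  have h1 : Nontrivial (H1Rep ℂ ρℓ) ↔
      ¬ (LinearMap.ker (lam t) ≤ Submodule.span ℂ (fox t '' wraagRels G ℓ)) :=
    (nontrivial_H1Rep_iff ρℓ).trans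
      (not_congr (ker_le_range_iff (wraagRels G ℓ) t ρℓ hρℓ))
  have h2 : Nontrivial (H1Rep ℂ ρ) ↔
      ¬ (LinearMap.ker (lam t) ≤ Submodule.span ℂ (fox t '' wraagRels G (fun _ _ => 1))) :=
    (nontrivial_H1Rep_iff ρ).trans
      (not_congr (ker_le_range_iff (wraagRels G (fun _ _ => 1)) t ρ hρ))
  rw [h1, h2, hspan]
end
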